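/- arXiv:0906.2605 — 7 statements merged into one kernel-verified Lean document; each statement's English description precedes it below -/
import Mathlib

section
/- Let ≺ be a left-invariant total order on B_3 such that every σ1-positive element is greater than the identity. Then, setting f = σ2^{-1}σ1 and g = σ1, we have 1 ≺ f, 1 ≺ g, and f·g^k ≺ g for every natural number k. In particular, ≺ is not Conradian. -/
/-- The single braid relation of `B₃`: σ₁σ₂σ₁ = σ₂σ₁σ₂. -/
def braidRels3 : Set (FreeGroup (Fin 2)) :=
  { FreeGroup.of 0 * FreeGroup.of 1 * FreeGroup.of 0 *
      (FreeGroup.of 1 * FreeGroup.of 0 * FreeGroup.of 1)⁻¹ }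

/-- The braid group `B₃ = ⟨σ₁, σ₂ | σ₁σ₂σ₁ = σ₂σ₁σ₂⟩`. -/
abbrev B₃ : Type := PresentedGroup braidRels3

def σ₁ : B₃ := PresentedGroup.of 0
def σ₂ : B₃ := PresentedGroup.of 1

/-- A left-invariant total order (left order) on a group `G`. -/
def IsLeftOrder {G : Type*} [Group G] (r : G → G → Prop) : Prop :=
  IsStrictTotalOrder G r ∧ ∀ h f g : G, r f g → r (h * f) (h * g)

/-- A left order is Conradian if for all positive `f, g` there is `k : ℕ`
with `g ≺ f·gᵏ`. -/
def IsConradian {G : Type*} [Group G] (r : G → G → Prop) : Prop :=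
  ∀ f g : G, r 1 f → r 1 g → ∃ k : ℕ, r g (f * g ^ k)

/-- The group element represented by a single letter `σᵢ^{±1}`
(`true` = positive letter, `false` = inverse letter). -/
def letterB₃ (x : Fin 2 × Bool) : B₃ :=
  if x.2 then PresentedGroup.of x.1 else (PresentedGroup.of x.1)⁻¹

/-- An element of `B₃` is σ₁-positive if it is represented by some word in
`σ₁^{±1}, σ₂^{±1}` containing at least one `σ₁` and no `σ₁⁻¹`. -/
def IsSigmaOnePositive (β : B₃) : Prop :=
  ∃ w : List (Fin 2 × Bool),
    (w.map letterB₃).prod = β ∧ ((0 : Fin 2), true) ∈ w ∧ ((0 : Fin 2), false) ∉ w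

lemma braid_rel : σ₁ * σ₂ * σ₁ = σ₂ * σ₁ * σ₂ := by
  have h : PresentedGroup.mk braidRels3
      (FreeGroup.of 0 * FreeGroup.of 1 * FreeGroup.of 0 *
        (FreeGroup.of 1 * FreeGroup.of 0 * FreeGroup.of 1)⁻¹) = 1 := by
    apply (QuotientGroup.eq_one_iff _).2
    exact Subgroup.subset_normalClosure rfl
  have h' : σ₁ * σ₂ * σ₁ * (σ₂ * σ₁ * σ₂)⁻¹ = 1 := by
    simpa [σ₁, σ₂, PresentedGroup.of] using h
  group at h' ⊢
  exact mul_inv_eq_one.mp h'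

lemma conj_lemma : ∀ n : ℕ, σ₁⁻¹ ^ n * (σ₂ * σ₁) = σ₂ * σ₁ * σ₂⁻¹ ^ n := by
  have base : σ₁⁻¹ * (σ₂ * σ₁) = σ₂ * σ₁ * σ₂⁻¹ := by
    have h := braid_rel
    have h2 : σ₁ * (σ₁⁻¹ * (σ₂ * σ₁)) = σ₁ * (σ₂ * σ₁ * σ₂⁻¹) := by
      rw [show σ₁ * (σ₂ * σ₁ * σ₂⁻¹) = σ₁ * σ₂ * σ₁ * σ₂⁻¹ by group, h]; group
    exact mul_left_cancel h2
  intro n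
  induction n with
  | zero => simp
  | succ n ih =>
    rw [pow_succ', mul_assoc, ih,
      show σ₁⁻¹ * (σ₂ * σ₁ * σ₂⁻¹ ^ n) = σ₁⁻¹ * (σ₂ * σ₁) * σ₂⁻¹ ^ n by group, base]
    group

lemma pos_elt (n : ℕ) : IsSigmaOnePositive (σ₂ * σ₁ * σ₂⁻¹ ^ n) := by
  refine ⟨((1 : Fin 2), true) :: ((0 : Fin 2), true) :: List.replicate n ((1 : Fin 2), false),
    ?_, by simp, ?_⟩
  · simp [letterB₃, List.map_replicate, List.prod_replicate, σ₁, σ₂, mul_assoc, inv_pow]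
  · simp [List.mem_replicate]

/-- If `≺` is a left order on `B₃` for which every σ₁-positive element is positive,
then `f = σ₂⁻¹σ₁` and `g = σ₁` are positive, `f·gᵏ ≺ g` for all `k`, and hence
`≺` is not Conradian. -/
theorem stmt_2 (r : B₃ → B₃ → Prop) (hr : IsLeftOrder r)
    (hpos : ∀ β : B₃, IsSigmaOnePositive β → r 1 β) :
    r 1 (σ₂⁻¹ * σ₁) ∧ r 1 σ₁ ∧ (∀ k : ℕ, r ((σ₂⁻¹ * σ₁) * σ₁ ^ k) σ₁) ∧
      ¬ IsConradian r := by
  obtain ⟨hsto, hleft⟩ := hr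
  have hf : r 1 (σ₂⁻¹ * σ₁) := by
    apply hpos
    exact ⟨[((1 : Fin 2), false), ((0 : Fin 2), true)], by simp [letterB₃, σ₁, σ₂], by simp, by simp⟩
  have hg : r 1 σ₁ := by
    apply hpos
    exact ⟨[((0 : Fin 2), true)], by simp [letterB₃, σ₁], by simp, by simp⟩
  have hk : ∀ k : ℕ, r ((σ₂⁻¹ * σ₁) * σ₁ ^ k) σ₁ := by
    intro k
    have h1 : r 1 (σ₂ * σ₁ * σ₂⁻¹ ^ (k + 1)) := hpos _ (pos_elt (k + 1))
    have h2 := hleft ((σ₂⁻¹ * σ₁) * σ₁ ^ k) _ _ h1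
    rw [mul_one] at h2
    have key : (σ₂⁻¹ * σ₁) * σ₁ ^ k * (σ₂ * σ₁ * σ₂⁻¹ ^ (k + 1)) = σ₁ := by
      rw [← conj_lemma (k + 1)]
      have : (σ₂⁻¹ * σ₁) * σ₁ ^ k = σ₂⁻¹ * σ₁ ^ (k + 1) := by rw [pow_succ']; group
      rw [this, inv_pow]
      group
    rwa [key] at h2
  refine ⟨hf, hg, hk, fun hC => ?_⟩
  obtain ⟨k, hk'⟩ := hC _ _ hf hg
  haveI := hsto
  exact absurd (trans_of r hk' (hk k)) (irrefl_of r σ₁)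
end

section
/- Let G be a group with a left-invariant total order ≺, and let C be a ≺-convex subgroup of G. Suppose the restriction of ≺ to C is not isolated, i.e., for every finite subset S ⊆ C there exists a left-invariant total order on C that agrees with ≺ on S × S but differs from the restriction of ≺ to C. Then ≺ is not isolated among the left-invariant total orders of G: for every finite subset T ⊆ G there exists a left-invariant total order on G that agrees with ≺ on T × T but differs from ≺. -/
/-- A subgroup `C` is convex for `r` if `f ≺ g ≺ h` with `f, h ∈ C` implies `g ∈ C`. -/
def IsConvexSubgroup {G : Type*} [Group G] (r : G → G → Prop) (C : Subgroup G) : Prop :=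
  ∀ f g h : G, f ∈ C → h ∈ C → r f g → r g h → g ∈ C

namespace IsLeftOrder

variable {G : Type*} [Group G] {r : G → G → Prop}

theorem mul_left_iff (hr : IsLeftOrder r) (h f g : G) : r (h * f) (h * g) ↔ r f g :=
  ⟨fun H => by simpa using hr.2 h⁻¹ _ _ H, hr.2 h f g⟩

theorem one_lt_inv_mul_iff (hr : IsLeftOrder r) (f g : G) : r 1 (f⁻¹ * g) ↔ r f g := by
  rw [← hr.mul_left_iff f, mul_one, mul_inv_cancel_left]

theorem one_lt_mul_iff (hr : IsLeftOrder r) (x y : G) : r 1 (x * y) ↔ r x⁻¹ y := by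
  simpa using hr.one_lt_inv_mul_iff x⁻¹ y

theorem one_lt_mul (hr : IsLeftOrder r) {x y : G} (hx : r 1 x) (hy : r 1 y) : r 1 (x * y) :=
  have := hr.1
  _root_.trans hx (by simpa using hr.2 x 1 y hy)

theorem one_lt_or_one_lt_inv (hr : IsLeftOrder r) {x : G} (hx : x ≠ 1) :
    r 1 x ∨ r 1 x⁻¹ := by
  have := hr.1
  rcases trichotomous_of r 1 x with h | h | h
  · exact Or.inl h
  · exact absurd h.symm hx
  · exact Or.inr (by simpa using hr.2 x⁻¹ x 1 h)

end IsLeftOrder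

theorem isLeftOrder_of_positiveCone {G : Type*} [Group G] (P : G → Prop) (one : ¬ P 1)
    (mul : ∀ x y, P x → P y → P (x * y)) (total : ∀ x, x ≠ 1 → P x ∨ P x⁻¹) :
    IsLeftOrder fun f g => P (f⁻¹ * g) := by
  refine ⟨{ trichotomous := fun f g hfg hgf => ?_, irrefl := fun f => ?_, trans := ?_ }, ?_⟩
  · by_contra hne
    rcases total (f⁻¹ * g) (by rwa [Ne, inv_mul_eq_one]) with h | h
    · exact hfg h
    · exact hgf (by simpa using h)
  · simpa using one
  · intro f g h hfg hgh
    simpa [mul_assoc] using mul _ _ hfg hgh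
  · intro h f g hfg
    simpa [mul_assoc] using hfg

namespace IsConvexSubgroup

variable {G : Type*} [Group G] {r : G → G → Prop} {C : Subgroup G}

theorem lt_of_one_lt_of_notMem (hr : IsLeftOrder r) (hC : IsConvexSubgroup r C) {c y : G}
    (hc : c ∈ C) (hy : y ∉ C) (h : r 1 y) : r c y := by
  have := hr.1
  rcases trichotomous_of r c y with hcy | rfl | hyc
  · exact hcy
  · exact absurd hc hy
  · exact absurd (hC 1 y c C.one_mem hc h hyc) hy

theorem lt_of_lt_one_of_notMem (hr : IsLeftOrder r) (hC : IsConvexSubgroup r C) {c y : G}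
    (hc : c ∈ C) (hy : y ∉ C) (h : r y 1) : r y c := by
  have := hr.1
  rcases trichotomous_of r y c with hyc | rfl | hcy
  · exact hyc
  · exact absurd hc hy
  · exact absurd (hC c y 1 hc C.one_mem hcy h) hy

end IsConvexSubgroup

section ConvexExtension

variable {G : Type*} [Group G] {r : G → G → Prop} {C : Subgroup G} {s : C → C → Prop}

/-- The positive cone of the left order on `G` that compares `f` and `g` by `s` when they lie in
the same coset `fC`, and by `r` otherwise. -/
noncomputable def extensionCone (r : G → G → Prop) (C : Subgroup G) (s : C → C → Prop)
    (x : G) : Prop :=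
  open Classical in if hx : x ∈ C then s 1 ⟨x, hx⟩ else r 1 x

theorem extensionCone_of_mem {x : G} (hx : x ∈ C) :
    extensionCone r C s x ↔ s 1 ⟨x, hx⟩ := by
  rw [extensionCone, dif_pos hx]

theorem extensionCone_of_notMem {x : G} (hx : x ∉ C) : extensionCone r C s x ↔ r 1 x := by
  rw [extensionCone, dif_neg hx]

theorem extensionCone_iff_of_agree {x : G} (h : ∀ hx : x ∈ C, s 1 ⟨x, hx⟩ ↔ r 1 x) :
    extensionCone r C s x ↔ r 1 x := by
  by_cases hx : x ∈ C
  · rw [extensionCone_of_mem hx, h hx]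
  · exact extensionCone_of_notMem hx

theorem extensionCone_inv_mul_iff (hs : IsLeftOrder s) (a b : C) :
    extensionCone r C s ((a : G)⁻¹ * b) ↔ s a b := by
  rw [extensionCone_of_mem (x := (a : G)⁻¹ * b) (a⁻¹ * b).2]
  exact hs.one_lt_inv_mul_iff a b

theorem extensionCone_mul (hr : IsLeftOrder r) (hC : IsConvexSubgroup r C) (hs : IsLeftOrder s)
    {x y : G} (hx : extensionCone r C s x) (hy : extensionCone r C s y) :
    extensionCone r C s (x * y) := by
  by_cases hxC : x ∈ C <;> by_cases hyC : y ∈ C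
  · rw [extensionCone_of_mem hxC] at hx
    rw [extensionCone_of_mem hyC] at hy
    rw [extensionCone_of_mem (C.mul_mem hxC hyC)]
    exact hs.one_lt_mul hx hy
  · rw [extensionCone_of_notMem hyC] at hy
    rw [extensionCone_of_notMem ((C.mul_mem_cancel_left hxC).not.2 hyC), hr.one_lt_mul_iff]
    exact hC.lt_of_one_lt_of_notMem hr (C.inv_mem hxC) hyC hy
  · rw [extensionCone_of_notMem hxC] at hx
    rw [extensionCone_of_notMem ((C.mul_mem_cancel_right hyC).not.2 hxC), hr.one_lt_mul_iff]
    refine hC.lt_of_lt_one_of_notMem hr hyC (C.inv_mem_iff.not.2 hxC) ?_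
    simpa using (hr.mul_left_iff x⁻¹ 1 x).2 hx
  · rw [extensionCone_of_notMem hxC] at hx
    rw [extensionCone_of_notMem hyC] at hy
    have hxy : r 1 (x * y) := hr.one_lt_mul hx hy
    -- `1 ≺ x ≺ x * y`, so convexity keeps `x * y` out of `C`
    have hxyC : x * y ∉ C := fun hxyC =>
      hxC (hC 1 x (x * y) C.one_mem hxyC hx (by simpa using hr.2 x 1 y hy))
    rwa [extensionCone_of_notMem hxyC]

theorem isLeftOrder_extension (hr : IsLeftOrder r) (hC : IsConvexSubgroup r C)
    (hs : IsLeftOrder s) : IsLeftOrder fun f g => extensionCone r C s (f⁻¹ * g) := by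
  have := hs.1
  refine isLeftOrder_of_positiveCone _ ?_ (fun x y => extensionCone_mul hr hC hs) fun x hx => ?_
  · rw [extensionCone_of_mem C.one_mem]
    exact irrefl_of s 1
  · by_cases hxC : x ∈ C
    · rw [extensionCone_of_mem hxC, extensionCone_of_mem (C.inv_mem hxC)]
      exact hs.one_lt_or_one_lt_inv (x := ⟨x, hxC⟩) (by simpa [Subtype.ext_iff] using hx)
    · rw [extensionCone_of_notMem hxC, extensionCone_of_notMem (C.inv_mem_iff.not.2 hxC)]
      exact hr.one_lt_or_one_lt_inv hx

end ConvexExtension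

/-- Convex extension: if `C` is an `r`-convex subgroup of `G` and the restriction of
`r` to `C` is not isolated (every finite subset of `C` admits a left order on `C`
agreeing with `r` there but different from the restriction of `r`), then `r` itself
is not isolated among the left orders of `G`. -/
theorem stmt_4 {G : Type*} [Group G] (r : G → G → Prop) (hr : IsLeftOrder r)
    (C : Subgroup G) (hC : IsConvexSubgroup r C)
    (hnotiso : ∀ S : Finset C, ∃ s : C → C → Prop, IsLeftOrder s ∧
      (∀ a ∈ S, ∀ b ∈ S, (s a b ↔ r (a : G) (b : G))) ∧
      s ≠ fun a b : C => r (a : G) (b : G)) :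
    ∀ T : Finset G, ∃ r' : G → G → Prop, IsLeftOrder r' ∧
      (∀ a ∈ T, ∀ b ∈ T, (r' a b ↔ r a b)) ∧ r' ≠ r := by
  classical
  intro T
  -- `r` on `T` is determined by the signs of the quotients `a⁻¹ * b`, `a b ∈ T`
  obtain ⟨s, hs, hagree, hne⟩ :=
    hnotiso (insert 1 (((T ×ˢ T).image fun p => p.1⁻¹ * p.2).subtype (· ∈ C)))
  refine ⟨fun f g => extensionCone r C s (f⁻¹ * g), isLeftOrder_extension hr hC hs, ?_, ?_⟩
  · intro a ha b hb
    show extensionCone r C s (a⁻¹ * b) ↔ r a b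
    rw [extensionCone_iff_of_agree fun hx => hagree 1 (Finset.mem_insert_self _ _) _ ?_,
      hr.one_lt_inv_mul_iff]
    exact Finset.mem_insert_of_mem <|
      Finset.mem_subtype.2 <| Finset.mem_image.2 ⟨(a, b), by simp [ha, hb]⟩
  · intro h
    refine hne (funext fun a => funext fun b => propext ?_)
    rw [← extensionCone_inv_mul_iff (r := r) hs a b]
    exact iff_of_eq (congrFun₂ h a b)
end

section
/- Let G be a countably infinite group with a left-invariant total order ≺ whose Conradian soul is trivial, i.e., the only ≺-convex subgroup of G on which the restriction of ≺ is Conradian is the trivial subgroup {1}. Then ≺ is an accumulation point of its conjugates: for every finite subset S ⊆ G there exists h ∈ G such that the conjugate order ≺_h agrees with ≺ on S × S but ≺_h ≠ ≺. -/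
/-- The restriction of `r` to the subgroup `C` is Conradian. -/
def IsConradianOn {G : Type*} [Group G] (r : G → G → Prop) (C : Subgroup G) : Prop :=
  ∀ f g : G, f ∈ C → g ∈ C → r 1 f → r 1 g → ∃ k : ℕ, r g (f * g ^ k)

/-- The conjugate of the order `r` by the group element `h`:
`f ≺_h g` iff `h⁻¹fh ≺ h⁻¹gh`. -/
def conjOrder {G : Type*} [Group G] (r : G → G → Prop) (h : G) : G → G → Prop :=
  fun f g => r (h⁻¹ * f * h) (h⁻¹ * g * h)

/-!
Let `K` be the subgroup of elements `h` for which conjugation by `h` preserves the order, and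
let `C` be the largest convex subgroup inside `K`: the `g` such that every element between `1`
and `g` lies in `K`. For `f, g ∈ C` with `1 < f` we get `1 < g⁻¹ f g`, i.e. `g < f g`, so the
order is Conradian on the convex subgroup `C`, which is therefore trivial.

Given a finite `S`, let `ε > 1` lie below every positive quotient `a⁻¹ b` with `a, b ∈ S`.
As `ε ∉ C`, some `f` with `1 ≤ f ≤ ε` lies outside `K`. Since `f ≤ ε ≤ a⁻¹ b`, conjugation by
`f` keeps each such quotient positive, so `≺_f` agrees with `≺` on `S`; and `≺_f ≠ ≺` as `f ∉ K`.
-/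

section LeftOrderedGroup

variable {G : Type*} [Group G] [LinearOrder G] [MulLeftMono G]

theorem mul_mem_uIcc_mul_iff (a b c x : G) :
    c * x ∈ Set.uIcc (c * a) (c * b) ↔ x ∈ Set.uIcc a b := by
  simp only [Set.mem_uIcc, mul_le_mul_iff_left]

theorem exists_one_lt_forall_one_lt_imp_le [Nontrivial G] (T : Finset G) :
    ∃ ε : G, 1 < ε ∧ ∀ t ∈ T, 1 < t → ε ≤ t := by
  classical
  obtain ⟨ε₀, hε₀⟩ : ∃ ε₀ : G, 1 < ε₀ := by
    obtain ⟨g, hg⟩ := exists_ne (1 : G)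
    rcases hg.lt_or_gt with hg | hg
    · exact ⟨g⁻¹, Left.one_lt_inv_iff.mpr hg⟩
    · exact ⟨g, hg⟩
  set T' := insert ε₀ (T.filter (1 < ·))
  have hT' : T'.Nonempty := Finset.insert_nonempty _ _
  refine ⟨T'.min' hT', ?_, fun t ht h1t => T'.min'_le t ?_⟩
  · obtain h | h := Finset.mem_insert.mp (T'.min'_mem hT')
    · exact h ▸ hε₀
    · exact (Finset.mem_filter.mp h).2
  · exact Finset.mem_insert_of_mem (Finset.mem_filter.mpr ⟨ht, h1t⟩)

theorem one_lt_conj_of_le {f t : G} (hf : 1 ≤ f) (hft : f ≤ t) (ht : 1 < t) :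
    1 < f⁻¹ * t * f := by
  rw [mul_assoc, lt_inv_mul_iff_lt]
  rcases hf.eq_or_lt with rfl | hf
  · simpa using ht
  · exact hft.trans_lt (lt_mul_of_one_lt_right' t hf)

theorem strictMonoOn_conj {f : G} {S : Set G}
    (hS : ∀ a ∈ S, ∀ b ∈ S, a < b → 1 < f⁻¹ * (a⁻¹ * b) * f) :
    StrictMonoOn (fun x => f⁻¹ * x * f) S := by
  intro a ha b hb hab
  rw [← lt_inv_mul_iff_lt]
  simpa [mul_assoc] using hS a ha b hb hab

variable (G) in
def conjStabilizer : Subgroup G where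
  carrier := {h | ∀ a b : G, h⁻¹ * a * h < h⁻¹ * b * h ↔ a < b}
  one_mem' := by simp
  mul_mem' {g h} hg hh a b := by
    have conj_mul : ∀ x, (g * h)⁻¹ * x * (g * h) = h⁻¹ * (g⁻¹ * x * g) * h := fun x => by group
    rw [conj_mul, conj_mul]
    exact (hh _ _).trans (hg a b)
  inv_mem' {g} hg a b := by
    rw [← hg]
    simp [mul_assoc]

theorem isConradianOn_of_le_conjStabilizer {C : Subgroup G} (hC : C ≤ conjStabilizer G) :
    IsConradianOn (· < ·) C := by
  intro f g _ hg hf _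
  refine ⟨1, ?_⟩
  have h := (hC hg 1 f).mpr hf
  rw [mul_one, inv_mul_cancel, mul_assoc, lt_inv_mul_iff_lt] at h
  simpa using h

namespace Subgroup

def convexCore (H : Subgroup G) : Subgroup G where
  carrier := {g | Set.uIcc 1 g ⊆ H}
  one_mem' := by simp
  mul_mem' {g h} hg hh f hf := by
    rcases Set.uIcc_subset_uIcc_union_uIcc hf with hf | hf
    · exact hg hf
    · have hgf : g⁻¹ * f ∈ Set.uIcc 1 h := (mul_mem_uIcc_mul_iff 1 h g _).mp (by simpa using hf)
      simpa using H.mul_mem (hg Set.right_mem_uIcc) (hh hgf)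
  inv_mem' {g} hg f hf := by
    have hgf : g * f ∈ Set.uIcc 1 g := by
      rw [Set.uIcc_comm]
      simpa using (mul_mem_uIcc_mul_iff 1 g⁻¹ g f).mpr hf
    simpa using H.mul_mem (H.inv_mem (hg Set.right_mem_uIcc)) (hg hgf)

theorem mem_convexCore {H : Subgroup G} {g : G} : g ∈ H.convexCore ↔ Set.uIcc 1 g ⊆ H :=
  Iff.rfl

theorem convexCore_le (H : Subgroup G) : H.convexCore ≤ H :=
  fun _ hg => hg Set.right_mem_uIcc

theorem isConvexSubgroup_convexCore (H : Subgroup G) :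
    IsConvexSubgroup (· < ·) H.convexCore := by
  intro f g h hf hh hfg hgh
  rw [mem_convexCore] at *
  rcases le_total 1 g with h1g | hg1
  · exact (Set.uIcc_subset_uIcc_left (Set.mem_uIcc_of_le h1g hgh.le)).trans hh
  · exact (Set.uIcc_subset_uIcc_left (Set.mem_uIcc_of_ge hfg.le hg1)).trans hf

theorem exists_mem_uIcc_notMem_of_convexCore_eq_bot {H : Subgroup G} (hH : H.convexCore = ⊥)
    {g : G} (hg : g ≠ 1) : ∃ f ∈ Set.uIcc 1 g, f ∉ H := by
  by_contra! h
  have : g ∈ H.convexCore := mem_convexCore.mpr h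
  rw [hH, mem_bot] at this
  exact hg this

end Subgroup

theorem exists_notMem_conjStabilizer_forall_conj_lt_conj_iff [Nontrivial G]
    (hcore : (conjStabilizer G).convexCore = ⊥) (S : Finset G) :
    ∃ f ∉ conjStabilizer G, ∀ a ∈ S, ∀ b ∈ S, f⁻¹ * a * f < f⁻¹ * b * f ↔ a < b := by
  classical
  obtain ⟨ε, hε, hεS⟩ := exists_one_lt_forall_one_lt_imp_le ((S ×ˢ S).image fun p => p.1⁻¹ * p.2)
  obtain ⟨f, hf, hfK⟩ := Subgroup.exists_mem_uIcc_notMem_of_convexCore_eq_bot hcore hε.ne'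
  rw [Set.uIcc_of_le hε.le] at hf
  refine ⟨f, hfK, fun a ha b hb => (strictMonoOn_conj ?_).lt_iff_lt ha hb⟩
  intro a ha b hb hab
  have hpos : 1 < a⁻¹ * b := lt_inv_mul_iff_lt.mpr (by simpa using hab)
  have hεle : ε ≤ a⁻¹ * b :=
    hεS _ (Finset.mem_image_of_mem _ (Finset.mk_mem_product ha hb)) hpos
  exact one_lt_conj_of_le hf.1 (hf.2.trans hεle) hpos

end LeftOrderedGroup

theorem stmt_6_general {G : Type*} [Group G] [Infinite G]
    (r : G → G → Prop) (hr : IsLeftOrder r)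
    (hsoul : ∀ C : Subgroup G, IsConvexSubgroup r C → IsConradianOn r C → C = ⊥) :
    ∀ S : Finset G, ∃ h : G,
      (∀ a ∈ S, ∀ b ∈ S, (conjOrder r h a b ↔ r a b)) ∧ conjOrder r h ≠ r := by
  classical
  obtain ⟨hsto, hmul⟩ := hr
  let : LinearOrder G := linearOrderOfSTO r
  have : MulLeftStrictMono G := ⟨fun h _ _ => hmul h _ _⟩
  have := mulLeftMono_of_mulLeftStrictMono G
  have hcore := hsoul _ (Subgroup.isConvexSubgroup_convexCore _)
    (isConradianOn_of_le_conjStabilizer (Subgroup.convexCore_le _))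
  intro S
  obtain ⟨f, hfK, hfS⟩ := exists_notMem_conjStabilizer_forall_conj_lt_conj_iff hcore S
  exact ⟨f, hfS, fun h => hfK fun a b => iff_of_eq (congrFun₂ h a b)⟩

/-- If the Conradian soul of a left order `≺` on a countably infinite group is
trivial (the only convex subgroup on which `≺` restricts to a Conradian order is
the trivial subgroup), then `≺` is an accumulation point of its conjugates. -/
theorem stmt_6 {G : Type*} [Group G] [Countable G] [Infinite G]
    (r : G → G → Prop) (hr : IsLeftOrder r)
    (hsoul : ∀ C : Subgroup G, IsConvexSubgroup r C → IsConradianOn r C → C = ⊥) :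
    ∀ S : Finset G, ∃ h : G,
      (∀ a ∈ S, ∀ b ∈ S, (conjOrder r h a b ↔ r a b)) ∧ conjOrder r h ≠ r :=
  stmt_6_general r hr hsoul
end

section
/- If a group G admits a Conradian left-invariant total order ≺ whose only ≺-convex subgroups are {1} and G itself, then G is abelian. -/
def IsArchimedeanOrder (G : Type*) [Monoid G] [LT G] : Prop :=
  ∀ f g : G, 1 < f → ∃ n : ℕ, g < f ^ n

section LeftOrdered

variable {G : Type*} [Group G] [LinearOrder G] [MulLeftStrictMono G]

attribute [local instance] mulLeftMono_of_mulLeftStrictMono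

theorem zpow_right_strictMono_of_one_lt {b : G} (hb : 1 < b) :
    StrictMono fun n : ℤ ↦ b ^ n :=
  strictMono_int_of_lt_succ fun n ↦ by
    rw [zpow_add_one]
    exact lt_mul_of_one_lt_right' _ hb

namespace IsConradian

variable (hc : IsConradian ((· < ·) : G → G → Prop))
include hc

theorem exists_mul_lt_pow {p g : G} (hp : 1 < p) (hg : g < p) : ∃ k : ℕ, g * p < p ^ k := by
  obtain ⟨k, hk⟩ := hc (g⁻¹ * p) p (by simpa using hg) hp
  rw [mul_assoc, lt_inv_mul_iff_mul_lt] at hk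
  exact ⟨k + 1, by rwa [pow_succ']⟩

theorem exists_mul_lt_pow_of_lt_pow {f a b : G} (hf : 1 < f) {m n : ℕ} (ha : a < f ^ m)
    (hb : b < f ^ n) : ∃ N : ℕ, a * b < f ^ N := by
  have mono := (pow_right_strictMono' hf).monotone
  set p := f ^ (m + n + 1)
  obtain ⟨k, hk⟩ := hc.exists_mul_lt_pow (one_lt_pow' hf (Nat.succ_ne_zero _))
    (ha.trans_le (mono (by omega)) : a < p)
  refine ⟨(m + n + 1) * k, ?_⟩
  calc a * b < a * p := mul_lt_mul_right (hb.trans_le (mono (by omega))) a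
    _ < p ^ k := hk
    _ = f ^ ((m + n + 1) * k) := (pow_mul f _ k).symm

def powBoundedSubgroup {f : G} (hf : 1 < f) : Subgroup G where
  carrier := {x | (∃ n : ℕ, x < f ^ n) ∧ ∃ n : ℕ, x⁻¹ < f ^ n}
  one_mem' := ⟨⟨1, by simpa using hf⟩, ⟨1, by simpa using hf⟩⟩
  inv_mem' := by
    rintro x ⟨hx, hx'⟩
    exact ⟨hx', by rwa [inv_inv]⟩
  mul_mem' := by
    rintro a b ⟨⟨_, ha⟩, ⟨_, ha'⟩⟩ ⟨⟨_, hb⟩, ⟨_, hb'⟩⟩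
    refine ⟨hc.exists_mul_lt_pow_of_lt_pow hf ha hb, ?_⟩
    rw [mul_inv_rev]
    exact hc.exists_mul_lt_pow_of_lt_pow hf hb' ha'

theorem self_mem_powBoundedSubgroup {f : G} (hf : 1 < f) : f ∈ hc.powBoundedSubgroup hf :=
  ⟨⟨2, by simpa using pow_lt_pow_right' hf one_lt_two⟩, ⟨0, by simpa using hf⟩⟩

theorem isConvexSubgroup_powBoundedSubgroup {f : G} (hf : 1 < f) :
    IsConvexSubgroup (· < ·) (hc.powBoundedSubgroup hf) := by
  rintro x y z ⟨-, ⟨_, hx'⟩⟩ ⟨⟨n, hz⟩, -⟩ hxy hyz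
  refine ⟨⟨n, hyz.trans hz⟩, ?_⟩
  have hyx : y⁻¹ * x < f ^ 0 := by simpa [inv_mul_lt_iff_lt_mul] using hxy
  simpa using hc.exists_mul_lt_pow_of_lt_pow hf hyx hx'

end IsConradian

theorem IsArchimedeanOrder.of_isConradian (hc : IsConradian ((· < ·) : G → G → Prop))
    (hconv : ∀ C : Subgroup G, IsConvexSubgroup (· < ·) C → C = ⊥ ∨ C = ⊤) :
    IsArchimedeanOrder G := by
  intro f g hf
  have hfC := hc.self_mem_powBoundedSubgroup hf
  rcases hconv _ (hc.isConvexSubgroup_powBoundedSubgroup hf) with hbot | htop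
  · rw [hbot, Subgroup.mem_bot] at hfC
    exact absurd hfC hf.ne'
  · have hgC : g ∈ hc.powBoundedSubgroup hf := htop ▸ Subgroup.mem_top g
    exact hgC.1

namespace IsArchimedeanOrder

variable (harch : IsArchimedeanOrder G)
include harch

theorem lt_mul_of_one_lt {a h : G} (ha : 1 < a) (hh : 1 < h) : h < a * h := by
  by_contra! hah
  have hpow : ∀ n : ℕ, a ^ n * h ≤ h := fun n ↦ by
    induction n with
    | zero => simp
    | succ n ih =>
      calc a ^ (n + 1) * h = a * (a ^ n * h) := by rw [pow_succ', mul_assoc]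
        _ ≤ a * h := mul_le_mul_right ih a
        _ ≤ h := hah
  obtain ⟨n, hn⟩ := harch a h ha
  exact lt_irrefl _ (((lt_mul_of_one_lt_right' _ hh).trans_le (hpow n)).trans hn)

theorem one_lt_conj_of_lt_one {a g : G} (ha : 1 < a) (hg : g < 1) : 1 < g * a * g⁻¹ := by
  rw [mul_assoc, ← inv_lt_iff_one_lt_mul']
  exact harch.lt_mul_of_one_lt ha (Left.one_lt_inv_iff.mpr hg)

theorem one_lt_conj {a : G} (ha : 1 < a) (g : G) : 1 < g * a * g⁻¹ := by
  rcases lt_trichotomy g 1 with hg | rfl | hg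
  · exact harch.one_lt_conj_of_lt_one ha hg
  · simpa using ha
  · by_contra! hle
    have hlt : g * a * g⁻¹ < 1 := hle.lt_of_ne (by simpa [conj_eq_one_iff] using ha.ne')
    -- conjugating back by `g⁻¹ < 1` would make `a⁻¹` positive
    have := harch.one_lt_conj_of_lt_one (Left.one_lt_inv_iff.mpr hlt) (Left.inv_lt_one_iff.mpr hg)
    simp only [mul_inv_rev, inv_inv, mul_assoc, inv_mul_cancel_left, inv_mul_cancel,
      mul_one] at this
    exact lt_asymm ha (Left.one_lt_inv_iff.mp this)

theorem mulRightStrictMono : MulRightStrictMono G where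
  elim c a b hab := by
    have := harch.one_lt_conj ((lt_inv_mul_iff_mul_lt).mpr (by simpa using hab)) c⁻¹
    simpa [mul_assoc, lt_inv_mul_iff_mul_lt] using this

end IsArchimedeanOrder

end LeftOrdered

section BiOrdered

variable {G : Type*} [Group G] [LinearOrder G] [MulLeftStrictMono G] [MulRightStrictMono G]

attribute [local instance] mulLeftMono_of_mulLeftStrictMono mulRightMono_of_mulRightStrictMono

theorem exists_one_lt_mul_self_le {a c : G} (hc : 1 < c) (hca : c < a) :
    ∃ b : G, 1 < b ∧ b * b ≤ a := by
  by_cases hcc : c * c ≤ a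
  · exact ⟨c, hc, hcc⟩
  · refine ⟨c⁻¹ * a, by simpa using hca, le_of_lt ?_⟩
    calc c⁻¹ * a * (c⁻¹ * a) < c * (c⁻¹ * a) :=
          mul_lt_mul_left (inv_mul_lt_iff_lt_mul.mpr (not_le.mp hcc)) _
      _ = a := mul_inv_cancel_left c a

namespace IsArchimedeanOrder

variable (harch : IsArchimedeanOrder G)
include harch

theorem exists_zpow_le_lt {b : G} (hb : 1 < b) (x : G) :
    ∃ m : ℤ, b ^ m ≤ x ∧ x < b ^ (m + 1) := by
  have hmono := zpow_right_strictMono_of_one_lt hb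
  obtain ⟨N, hN⟩ := harch b x hb
  obtain ⟨n, hn⟩ := harch b x⁻¹ hb
  have hbdd : ∀ z : ℤ, b ^ z ≤ x → z ≤ N := fun z hz ↦
    (hmono.lt_iff_lt.mp (hz.trans_lt (by simpa using hN))).le
  have hinh : b ^ (-(n : ℤ)) ≤ x := by simpa using (inv_lt'.mp hn).le
  obtain ⟨m, hm, hmax⟩ := Int.exists_greatest_of_bdd ⟨N, hbdd⟩ ⟨_, hinh⟩
  exact ⟨m, hm, not_le.mp fun h ↦ by simpa using hmax (m + 1) h⟩

theorem inv_mul_mul_lt_mul_self {b : G} (hb : 1 < b) (x y : G) :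
    (y * x)⁻¹ * (x * y) < b * b := by
  obtain ⟨m, hm, hm'⟩ := harch.exists_zpow_le_lt hb x
  obtain ⟨n, hn, hn'⟩ := harch.exists_zpow_le_lt hb y
  have hyx : (y * x)⁻¹ ≤ b ^ (-(n + m)) := by
    rw [zpow_neg, inv_le_inv_iff, zpow_add]
    exact mul_le_mul' hn hm
  have hxy : x * y < b ^ (m + 1 + (n + 1)) := by
    rw [zpow_add]
    exact mul_lt_mul_of_lt_of_lt hm' hn'
  calc (y * x)⁻¹ * (x * y) < b ^ (-(n + m)) * b ^ (m + 1 + (n + 1)) :=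
        mul_lt_mul_of_le_of_lt hyx hxy
    _ = b * b := by rw [← zpow_add, ← zpow_two]; ring_nf

theorem exists_eq_zpow_of_forall_le {a : G} (ha : 1 < a) (hmin : ∀ c : G, 1 < c → a ≤ c)
    (x : G) : ∃ m : ℤ, x = a ^ m := by
  obtain ⟨m, hm, hm'⟩ := harch.exists_zpow_le_lt ha x
  have hle : 1 ≤ (a ^ m)⁻¹ * x := le_inv_mul_iff_mul_le.mpr (by simpa using hm)
  have hlt : (a ^ m)⁻¹ * x < a := inv_mul_lt_iff_lt_mul.mpr (by rwa [← zpow_add_one])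
  obtain heq | hpos := hle.eq_or_lt
  · exact ⟨m, (inv_mul_eq_one.mp heq.symm).symm⟩
  · exact absurd (hmin _ hpos) (not_le.mpr hlt)

theorem mul_le_mul_swap (x y : G) : x * y ≤ y * x := by
  by_contra! hlt
  set a := (y * x)⁻¹ * (x * y)
  have ha : 1 < a := lt_inv_mul_iff_mul_lt.mpr (by simpa using hlt)
  by_cases hsmall : ∃ c : G, 1 < c ∧ c < a
  · obtain ⟨c, hc, hca⟩ := hsmall
    obtain ⟨b, hb, hba⟩ := exists_one_lt_mul_self_le hc hca
    exact lt_irrefl _ ((harch.inv_mul_mul_lt_mul_self hb x y).trans_le hba)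
  · simp only [not_exists, not_and, not_lt] at hsmall
    obtain ⟨m, hm⟩ := harch.exists_eq_zpow_of_forall_le ha hsmall x
    obtain ⟨n, hn⟩ := harch.exists_eq_zpow_of_forall_le ha hsmall y
    have hxy : Commute x y := by
      rw [hm, hn]
      exact Commute.zpow_zpow_self a m n
    exact hlt.ne' hxy.eq

theorem mul_comm (x y : G) : x * y = y * x :=
  le_antisymm (harch.mul_le_mul_swap x y) (harch.mul_le_mul_swap y x)

end IsArchimedeanOrder

end BiOrdered

/-- (Hölder-type theorem for Conradian orders.) If a group admits a Conradian
left order whose only convex subgroups are `{1}` and the whole group, then the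
group is abelian. -/
theorem stmt_7 {G : Type*} [Group G] (r : G → G → Prop) (hr : IsLeftOrder r)
    (hc : IsConradian r)
    (hconv : ∀ C : Subgroup G, IsConvexSubgroup r C → C = ⊥ ∨ C = ⊤) :
    ∀ a b : G, a * b = b * a := by
  obtain ⟨hsto, hleft⟩ := hr
  classical
  let : LinearOrder G := linearOrderOfSTO r
  have : MulLeftStrictMono G := ⟨fun c _ _ h ↦ hleft c _ _ h⟩
  have harch : IsArchimedeanOrder G := .of_isConradian hc hconv
  have := harch.mulRightStrictMono
  exact harch.mul_comm
end

section
/- If a group G admits a Conradian left-invariant total order ≺ having only finitely many ≺-convex subgroups, then G is solvable. -/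
/-!
Let `C` be a maximal proper convex subgroup (it exists since there are finitely many convex
subgroups) and let `1 < f` with `f ∉ C`. The Conradian property makes the elements bounded
by powers of `f` a convex subgroup strictly above `C`, so every element lies below some power
of `f`. A descent along the powers of `f` shows that every element also lies above some `f⁻ᵐ`:
otherwise one produces a positive `x ∉ C` whose conjugate by `f` is not positive, although
`f < xⁿ` forces `1 < f⁻¹ x f`. Squeezing conjugates between powers then makes `C` normal with a
conjugation-invariant positive cone on `G ⧸ C`, which is archimedean, so `G ⧸ C` is abelian by
Hölder's theorem. Finally `C`, with the restricted order, is Conradian with fewer convex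
subgroups, and induction gives solvability.
-/

theorem Nat.exists_and_not_succ {P : ℕ → Prop} (h0 : P 0) (hN : ∃ N, ¬ P N) :
    ∃ n, P n ∧ ¬ P (n + 1) := by
  by_contra! h
  obtain ⟨N, hN⟩ := hN
  induction N with
  | zero => exact hN h0
  | succ N ih => exact ih fun hPN => hN (h N hPN)

section LeftOrdered

attribute [local instance] mulLeftMono_of_mulLeftStrictMono

variable {G : Type*} [Group G] [LinearOrder G] [MulLeftStrictMono G]

theorem one_lt_of_one_lt_pow {x : G} {n : ℕ} (h : 1 < x ^ n) : 1 < x := by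
  by_contra! hx
  exact h.not_ge (pow_le_one' hx n)

theorem zpow_strictMono_of_one_lt {a : G} (ha : 1 < a) : StrictMono fun n : ℤ => a ^ n :=
  strictMono_int_of_lt_succ fun n => by
    rw [zpow_add_one]
    exact lt_mul_of_one_lt_right' _ ha

theorem lt_pow_of_lt_pow_of_le {f x : G} (hf : 1 < f) {n m : ℕ} (hx : x < f ^ n) (hnm : n ≤ m) :
    x < f ^ m :=
  hx.trans_le (pow_le_pow_right' hf.le hnm)

theorem one_lt_conj_of_lt_pow {f x : G} (hf : 1 < f) {n : ℕ} (hn : f < x ^ n) :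
    1 < f⁻¹ * x * f := by
  refine one_lt_of_one_lt_pow (n := n) ?_
  have hconj : (f⁻¹ * x * f) ^ n = f⁻¹ * (x ^ n * f) := by
    simpa [mul_assoc] using conj_pow (a := f⁻¹) (b := x) (i := n)
  rw [hconj, lt_inv_mul_iff_mul_lt, mul_one]
  exact hn.trans (lt_mul_of_one_lt_right' _ hf)

instance Subgroup.mulLeftStrictMono (C : Subgroup G) : MulLeftStrictMono C :=
  ⟨fun a _ _ h => mul_lt_mul_right (α := G) h a⟩

end LeftOrdered

section Holder

open scoped commutatorElement

attribute [local instance] mulLeftMono_of_mulLeftStrictMono mulRightMono_of_mulRightStrictMono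

variable {H : Type*} [Group H] [LinearOrder H] [MulLeftStrictMono H] [MulRightStrictMono H]

theorem exists_zpow_le_lt (arch : ∀ x ε : H, 1 < ε → ∃ n : ℕ, x ≤ ε ^ n) {ε : H} (hε : 1 < ε)
    (x : H) : ∃ p : ℤ, ε ^ p ≤ x ∧ x < ε ^ (p + 1) := by
  have hmono := zpow_strictMono_of_one_lt hε
  obtain ⟨N, hN⟩ := arch x ε hε
  obtain ⟨M, hM⟩ := arch x⁻¹ ε hε
  obtain ⟨p, hp, hpmax⟩ := Int.exists_greatest_of_bdd (P := fun p : ℤ => ε ^ p ≤ x)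
    ⟨N, fun p hp => hmono.le_iff_le.1 (by simpa using hp.trans hN)⟩
    ⟨-M, by simpa using inv_le'.1 hM⟩
  exact ⟨p, hp, lt_of_not_ge fun h => by linarith [hpmax _ h]⟩

theorem eq_zpow_of_forall_le (arch : ∀ x ε : H, 1 < ε → ∃ n : ℕ, x ≤ ε ^ n) {a : H}
    (ha : 1 < a) (hmin : ∀ z, 1 < z → a ≤ z) (x : H) : ∃ k : ℤ, x = a ^ k := by
  obtain ⟨p, hp, hp1⟩ := exists_zpow_le_lt arch ha x
  refine ⟨p, by_contra fun hne => ?_⟩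
  have h1 : 1 < (a ^ p)⁻¹ * x := by
    rw [lt_inv_mul_iff_mul_lt, mul_one]
    exact hp.lt_of_ne fun h => hne h.symm
  have h2 : (a ^ p)⁻¹ * x < a := by rwa [inv_mul_lt_iff_lt_mul, ← zpow_add_one]
  exact (hmin _ h1).not_gt h2

theorem exists_mul_self_le (hdense : ∀ a : H, 1 < a → ∃ b, 1 < b ∧ b < a) {c : H} (hc : 1 < c) :
    ∃ ε, 1 < ε ∧ ε * ε ≤ c := by
  obtain ⟨w, hw, hwc⟩ := hdense c hc
  rcases le_total w (c * w⁻¹) with h | h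
  · exact ⟨w, hw, by simpa using mul_le_mul_left h w⟩
  · refine ⟨c * w⁻¹, by rwa [lt_mul_inv_iff_mul_lt, one_mul], ?_⟩
    simpa using mul_le_mul_right h (c * w⁻¹)

theorem commutatorElement_lt_mul_self (arch : ∀ x ε : H, 1 < ε → ∃ n : ℕ, x ≤ ε ^ n) {ε : H}
    (hε : 1 < ε) (a b : H) : ⁅a, b⁆ < ε * ε := by
  obtain ⟨p, hpa, hap⟩ := exists_zpow_le_lt arch hε a
  obtain ⟨q, hqb, hbq⟩ := exists_zpow_le_lt arch hε b
  have hab : a * b < ε ^ (p + 1 + (q + 1)) := by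
    rw [zpow_add]
    exact mul_lt_mul_of_lt_of_le hap hbq.le
  have hba : ε ^ (q + p) ≤ b * a := by
    rw [zpow_add]
    exact mul_le_mul' hqb hpa
  calc ⁅a, b⁆ = a * b * (b * a)⁻¹ := by rw [commutatorElement_def]; group
    _ < ε ^ (p + 1 + (q + 1)) * (ε ^ (q + p))⁻¹ :=
      mul_lt_mul_of_lt_of_le hab (inv_le_inv_iff.2 hba)
    _ = ε * ε := by
      rw [← zpow_neg, ← zpow_add, show p + 1 + (q + 1) + -(q + p) = 2 by ring, zpow_two]

theorem mul_comm_of_archimedean (arch : ∀ x ε : H, 1 < ε → ∃ n : ℕ, x ≤ ε ^ n) (a b : H) :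
    a * b = b * a := by
  by_cases hmin : ∃ a₀ : H, 1 < a₀ ∧ ∀ z, 1 < z → a₀ ≤ z
  · obtain ⟨a₀, ha₀, hmin⟩ := hmin
    obtain ⟨i, rfl⟩ := eq_zpow_of_forall_le arch ha₀ hmin a
    obtain ⟨j, rfl⟩ := eq_zpow_of_forall_le arch ha₀ hmin b
    exact Commute.zpow_zpow_self a₀ i j
  · push Not at hmin
    have hle : ∀ a b : H, ⁅a, b⁆ ≤ 1 := fun a b => by
      by_contra! h
      obtain ⟨ε, hε, hεc⟩ := exists_mul_self_le hmin h
      exact (commutatorElement_lt_mul_self arch hε a b).not_ge hεc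
    have hab : ⁅a, b⁆ = 1 :=
      (hle a b).antisymm (by simpa using Left.one_le_inv_iff.2 (hle b a))
    exact commutatorElement_eq_one_iff_mul_comm.1 hab

end Holder

theorem mul_comm_of_positiveCone {H : Type*} [Group H] (P : H → Prop) (one_not : ¬ P 1)
    (mul : ∀ a b, P a → P b → P (a * b)) (total : ∀ a, a ≠ 1 → P a ∨ P a⁻¹)
    (conj : ∀ a b, P a → P (b⁻¹ * a * b))
    (arch : ∀ x ε, P ε → ∃ n : ℕ, x = ε ^ n ∨ P (x⁻¹ * ε ^ n)) (a b : H) : a * b = b * a := by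
  have hsto : IsStrictTotalOrder H (fun a b => P (a⁻¹ * b)) :=
    { trichotomous := fun a b hab hba => by
        by_contra hne
        rcases total (a⁻¹ * b) (by rwa [Ne, inv_mul_eq_one]) with h | h
        · exact hab h
        · exact hba (by simpa using h)
      irrefl := fun a => by simpa using one_not
      trans := fun a b c hab hbc => by simpa [mul_assoc] using mul _ _ hab hbc }
  let _ : LinearOrder H := @linearOrderOfSTO H _ hsto (Classical.decRel _)
  have : MulLeftStrictMono H := ⟨fun c a b (h : P (a⁻¹ * b)) =>
    show P ((c * a)⁻¹ * (c * b)) by simpa [mul_assoc] using h⟩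
  have : MulRightStrictMono H := ⟨fun c a b (h : P (a⁻¹ * b)) =>
    show P ((a * c)⁻¹ * (b * c)) by simpa [mul_assoc] using conj _ c h⟩
  refine mul_comm_of_archimedean (fun x ε hε => arch x ε ?_) a b
  have hε' : P (1⁻¹ * ε) := hε
  simpa using hε'

section ConvexSubgroup

variable {G : Type*} [Group G] [LinearOrder G] {C : Subgroup G}

theorem isConvexSubgroup_bot : IsConvexSubgroup (G := G) (· < ·) ⊥ := by
  intro f g h hf hh hfg hgh
  rw [Subgroup.mem_bot] at hf hh
  subst hf hh
  exact absurd (hfg.trans hgh) (lt_irrefl 1)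

theorem isConvexSubgroup_top : IsConvexSubgroup (G := G) (· < ·) ⊤ :=
  fun _ _ _ _ _ _ _ => Subgroup.mem_top _

theorem IsConvexSubgroup.lt_of_mem_of_one_lt (hC : IsConvexSubgroup (· < ·) C) {c f : G}
    (hc : c ∈ C) (hf : 1 < f) (hfC : f ∉ C) : c < f := by
  by_contra! h
  rcases h.lt_or_eq with h | rfl
  exacts [hfC (hC 1 f c C.one_mem hc hf h), hfC hc]

theorem IsConvexSubgroup.lt_of_mem_of_lt_one (hC : IsConvexSubgroup (· < ·) C) {c f : G}
    (hc : c ∈ C) (hf : f < 1) (hfC : f ∉ C) : f < c := by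
  by_contra! h
  rcases h.lt_or_eq with h | rfl
  exacts [hfC (hC c f 1 hc C.one_mem h hf), hfC hc]

theorem eq_top_of_maximal_of_lt
    (hC : Maximal (fun D : Subgroup G => IsConvexSubgroup (· < ·) D ∧ D ≠ ⊤) C)
    {D : Subgroup G} (hD : IsConvexSubgroup (· < ·) D) (hCD : C < D) : D = ⊤ := by
  by_contra hDtop
  exact hCD.not_ge (hC.2 ⟨hD, hDtop⟩ hCD.le)

theorem IsConvexSubgroup.mapsTo_map_subtype (hC : IsConvexSubgroup (· < ·) C) (hCtop : C ≠ ⊤) :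
    Set.MapsTo (Subgroup.map C.subtype) {D : Subgroup C | IsConvexSubgroup (· < ·) D}
      ({D : Subgroup G | IsConvexSubgroup (· < ·) D} \ {⊤}) := by
  intro D hD
  refine ⟨?_, fun htop => hCtop (top_le_iff.1 (htop ▸ Subgroup.map_subtype_le D))⟩
  rintro _ g _ ⟨f, hfD, rfl⟩ ⟨h, hhD, rfl⟩ hfg hgh
  have hgC : g ∈ C := hC f g h f.2 h.2 hfg hgh
  exact ⟨⟨g, hgC⟩, hD f ⟨g, hgC⟩ h hfD hhD hfg hgh, rfl⟩

theorem IsConradian.subgroup (hc : IsConradian (G := G) (· < ·)) (C : Subgroup G) :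
    IsConradian (G := C) (· < ·) := fun f g hf hg => by
  obtain ⟨k, hk⟩ := hc f g hf hg
  exact ⟨k, Subtype.coe_lt_coe.1 (by simpa using hk)⟩

end ConvexSubgroup

section Conradian

attribute [local instance] mulLeftMono_of_mulLeftStrictMono

variable {G : Type*} [Group G] [LinearOrder G] [MulLeftStrictMono G] {C : Subgroup G}

theorem IsConradian.exists_mul_lt_pow_s8 (hc : IsConradian (G := G) (· < ·)) {f x : G} (hf : 1 < f)
    {N : ℕ} (hx : x < f ^ N) : ∃ K : ℕ, x * f < f ^ K := by
  have hb : 1 < x⁻¹ * f ^ N := by rwa [lt_inv_mul_iff_mul_lt, mul_one]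
  obtain ⟨k, hk⟩ := hc _ f hb hf
  refine ⟨N + k, ?_⟩
  simpa [← mul_assoc, pow_add] using mul_lt_mul_right hk x

theorem IsConradian.exists_mul_pow_lt_pow (hc : IsConradian (G := G) (· < ·)) {f x : G}
    (hf : 1 < f) {N : ℕ} (hx : x < f ^ N) (m : ℕ) : ∃ K : ℕ, x * f ^ m < f ^ K := by
  induction m with
  | zero => exact ⟨N, by simpa using hx⟩
  | succ m ih =>
    obtain ⟨K, hK⟩ := ih
    simpa [pow_succ, mul_assoc] using hc.exists_mul_lt_pow_s8 hf hK

def IsConradian.boundedSubgroup (hc : IsConradian (G := G) (· < ·)) {f : G} (hf : 1 < f) :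
    Subgroup G where
  carrier := {g | ∃ n : ℕ, g < f ^ n ∧ g⁻¹ < f ^ n}
  one_mem' := ⟨1, by simpa using hf, by simpa using hf⟩
  inv_mem' := by
    rintro g ⟨n, hg, hg'⟩
    exact ⟨n, hg', by simpa using hg⟩
  mul_mem' := by
    rintro g h ⟨n, hg, hg'⟩ ⟨m, hh, hh'⟩
    obtain ⟨K, hK⟩ := hc.exists_mul_pow_lt_pow hf hg m
    obtain ⟨L, hL⟩ := hc.exists_mul_pow_lt_pow hf hh' n
    refine ⟨max K L, ?_, ?_⟩
    · exact lt_pow_of_lt_pow_of_le hf ((mul_lt_mul_right hh g).trans hK) (le_max_left _ _)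
    · rw [mul_inv_rev]
      exact lt_pow_of_lt_pow_of_le hf ((mul_lt_mul_right hg' h⁻¹).trans hL) (le_max_right _ _)

theorem IsConradian.isConvexSubgroup_boundedSubgroup (hc : IsConradian (G := G) (· < ·)) {f : G}
    (hf : 1 < f) : IsConvexSubgroup (· < ·) (hc.boundedSubgroup hf) := by
  rintro x g z ⟨n, hx, hx'⟩ ⟨m, hz, -⟩ hxg hgz
  -- `g⁻¹ = w⁻¹ * x⁻¹` with `w = x⁻¹ * g > 1`
  have hw : (x⁻¹ * g)⁻¹ < f ^ 0 := by
    rwa [pow_zero, Left.inv_lt_one_iff, lt_inv_mul_iff_mul_lt, mul_one]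
  obtain ⟨K, hK⟩ := hc.exists_mul_pow_lt_pow hf hw n
  refine ⟨max m K, lt_pow_of_lt_pow_of_le hf (hgz.trans hz) (le_max_left _ _), ?_⟩
  have hg' : g⁻¹ < (x⁻¹ * g)⁻¹ * f ^ n := by
    simpa [mul_assoc] using mul_lt_mul_right hx' (x⁻¹ * g)⁻¹
  exact lt_pow_of_lt_pow_of_le hf (hg'.trans hK) (le_max_right _ _)

theorem IsConradian.boundedSubgroup_eq_top (hc : IsConradian (G := G) (· < ·))
    (hC : Maximal (fun D : Subgroup G => IsConvexSubgroup (· < ·) D ∧ D ≠ ⊤) C)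
    {f : G} (hf : 1 < f) (hfC : f ∉ C) : hc.boundedSubgroup hf = ⊤ := by
  refine eq_top_of_maximal_of_lt hC (hc.isConvexSubgroup_boundedSubgroup hf) ?_
  have hCle : C ≤ hc.boundedSubgroup hf := fun c hc' =>
    ⟨1, by simpa using hC.1.1.lt_of_mem_of_one_lt hc' hf hfC,
      by simpa using hC.1.1.lt_of_mem_of_one_lt (C.inv_mem hc') hf hfC⟩
  have hfmem : f ∈ hc.boundedSubgroup hf :=
    ⟨2, by simpa using pow_lt_pow_right' hf one_lt_two,
      (Left.inv_lt_one_iff.2 hf).trans (one_lt_pow' hf two_ne_zero)⟩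
  exact lt_of_le_of_ne hCle fun h => hfC (h ▸ hfmem)

theorem IsConradian.exists_lt_pow_of_maximal (hc : IsConradian (G := G) (· < ·))
    (hC : Maximal (fun D : Subgroup G => IsConvexSubgroup (· < ·) D ∧ D ≠ ⊤) C)
    {f : G} (hf : 1 < f) (hfC : f ∉ C) (x : G) : ∃ n : ℕ, x < f ^ n ∧ x⁻¹ < f ^ n := by
  have hx : x ∈ hc.boundedSubgroup hf := by
    rw [hc.boundedSubgroup_eq_top hC hf hfC]
    exact Subgroup.mem_top x
  exact hx

theorem IsConradian.one_lt_conj_of_maximal (hc : IsConradian (G := G) (· < ·))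
    (hC : Maximal (fun D : Subgroup G => IsConvexSubgroup (· < ·) D ∧ D ≠ ⊤) C)
    {x p : G} (hx : 1 < x) (hxC : x ∉ C) (hp : 1 < p) : 1 < p⁻¹ * x * p := by
  obtain ⟨n, hn, -⟩ := hc.exists_lt_pow_of_maximal hC hx hxC p
  exact one_lt_conj_of_lt_pow hp hn

theorem IsConradian.exists_inv_pow_lt_of_maximal (hc : IsConradian (G := G) (· < ·))
    (hC : Maximal (fun D : Subgroup G => IsConvexSubgroup (· < ·) D ∧ D ≠ ⊤) C)
    {f : G} (hf : 1 < f) (hfC : f ∉ C) (x : G) : ∃ m : ℕ, (f ^ m)⁻¹ < x := by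
  by_contra! hx
  let Q : G → Prop := fun y => ∀ m : ℕ, y < (f ^ m)⁻¹
  have hQ_pow_mul : ∀ {y : G} (k : ℕ), Q y → Q (f ^ k * y) := fun k hy m => by
    rw [← lt_inv_mul_iff_mul_lt, ← mul_inv_rev, ← pow_add]
    exact hy _
  have hQx : Q x := fun m => (hx (m + 1)).trans_lt <| by
    simpa [pow_succ'] using mul_lt_mul_right (Left.inv_lt_one_iff.2 hf) (f ^ m)⁻¹
  obtain ⟨N, -, hN⟩ := hc.exists_lt_pow_of_maximal hC hf hfC x
  have hQN : ¬ Q (x * f ^ N) := fun h => by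
    have h0 : x * f ^ N < 1 := by simpa using h 0
    rw [← lt_inv_mul_iff_mul_lt, mul_one] at h0
    exact hN.not_gt h0
  obtain ⟨s, hs, hs1⟩ :=
    Nat.exists_and_not_succ (P := fun s => Q (x * f ^ s)) (by simpa using hQx) ⟨N, hQN⟩
  simp only [Q, not_forall, not_lt] at hs1
  obtain ⟨K, hK⟩ := hs1
  set w := f ^ K * (x * f ^ s)
  have hw : Q w := hQ_pow_mul K hs
  have hwf : 1 ≤ w * f := by
    rw [inv_le_iff_one_le_mul', pow_succ, ← mul_assoc] at hK
    simpa [w, mul_assoc] using hK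
  -- `(f * w)⁻¹` is positive and outside `C`, but its conjugate `(w * f)⁻¹` by `f` is not positive
  have hfw : f * w < 1 := by simpa using lt_inv_mul_iff_mul_lt.1 (by simpa using hw 1)
  have hfwC : (f * w)⁻¹ ∉ C := fun hm => by
    have h1 := hC.1.1.lt_of_mem_of_lt_one (by simpa using C.inv_mem hm)
      (Left.inv_lt_one_iff.2 hf) (fun h => hfC (by simpa using C.inv_mem h))
    have h2 : f * w < f⁻¹ := by simpa [pow_two] using mul_lt_mul_right (hw 2) f
    exact h1.not_gt h2
  have hconj := hc.one_lt_conj_of_maximal hC (Left.one_lt_inv_iff.2 hfw) hfwC hf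
  rw [show f⁻¹ * (f * w)⁻¹ * f = (w * f)⁻¹ by group, Left.one_lt_inv_iff] at hconj
  exact hconj.not_ge hwf

theorem IsConradian.normal_of_maximal (hc : IsConradian (G := G) (· < ·))
    (hC : Maximal (fun D : Subgroup G => IsConvexSubgroup (· < ·) D ∧ D ≠ ⊤) C) : C.Normal := by
  have key : ∀ c ∈ C, ∀ g : G, 1 < g * c * g⁻¹ → g * c * g⁻¹ ∈ C := by
    intro c hcC g hd
    by_contra hdC
    obtain ⟨n, hn, -⟩ := hc.exists_lt_pow_of_maximal hC hd hdC g
    obtain ⟨m, hm⟩ := hc.exists_inv_pow_lt_of_maximal hC hd hdC g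
    rw [conj_pow] at hn hm
    -- `g` lies between `d⁻ᵐ` and `dⁿ` for `d = g * c * g⁻¹`, so `g⁻¹` lies between `c⁻ⁿ` and `cᵐ`
    have h1 : (c ^ n)⁻¹ < g⁻¹ := by
      rw [mul_assoc, lt_mul_iff_one_lt_right', ← inv_mul_lt_iff_lt_mul, mul_one] at hn
      exact hn
    have h2 : g⁻¹ < c ^ m := by
      rw [show (g * c ^ m * g⁻¹)⁻¹ = g * ((c ^ m)⁻¹ * g⁻¹) by group, mul_lt_iff_lt_one_left',
        inv_mul_lt_iff_lt_mul, mul_one] at hm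
      exact hm
    have hg : g⁻¹ ∈ C := hC.1.1 _ _ _ (C.inv_mem (C.pow_mem hcC n)) (C.pow_mem hcC m) h1 h2
    exact hdC (by simpa using C.mul_mem (C.mul_mem (C.inv_mem hg) hcC) hg)
  refine ⟨fun c hcC g => ?_⟩
  rcases lt_trichotomy 1 (g * c * g⁻¹) with h | h | h
  · exact key c hcC g h
  · exact h ▸ C.one_mem
  · have hinv : 1 < g * c⁻¹ * g⁻¹ := by
      rwa [show g * c⁻¹ * g⁻¹ = (g * c * g⁻¹)⁻¹ by group, Left.one_lt_inv_iff]
    simpa [mul_assoc] using C.inv_mem (key c⁻¹ (C.inv_mem hcC) g hinv)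

theorem IsConradian.one_lt_conj_of_notMem (hc : IsConradian (G := G) (· < ·))
    (hC : Maximal (fun D : Subgroup G => IsConvexSubgroup (· < ·) D ∧ D ≠ ⊤) C)
    {g : G} (hg : 1 < g) (hgC : g ∉ C) (h : G) : 1 < h * g * h⁻¹ := by
  rcases lt_trichotomy h 1 with hh | rfl | hh
  · simpa using hc.one_lt_conj_of_maximal hC hg hgC (Left.one_lt_inv_iff.2 hh)
  · simpa using hg
  · have hN := hc.normal_of_maximal hC
    by_contra! hz
    have hz' : h * g * h⁻¹ < 1 := hz.lt_of_ne fun h1 => hg.ne' (by simpa using h1)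
    have hzC : h * g⁻¹ * h⁻¹ ∉ C := fun hm => hgC <| by
      simpa [mul_assoc] using C.inv_mem (hN.conj_mem _ hm h⁻¹)
    have hconj := hc.one_lt_conj_of_maximal hC
      (by rwa [show h * g⁻¹ * h⁻¹ = (h * g * h⁻¹)⁻¹ by group, Left.one_lt_inv_iff]) hzC hh
    rw [show h⁻¹ * (h * g⁻¹ * h⁻¹) * h = g⁻¹ by group, Left.one_lt_inv_iff] at hconj
    exact hconj.not_gt hg

theorem IsConradian.mul_comm_quotient_of_maximal (hc : IsConradian (G := G) (· < ·))
    (hC : Maximal (fun D : Subgroup G => IsConvexSubgroup (· < ·) D ∧ D ≠ ⊤) C) [C.Normal]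
    (a b : G ⧸ C) : a * b = b * a := by
  refine mul_comm_of_positiveCone (fun q => ∃ g : G, (g : G ⧸ C) = q ∧ g ∉ C ∧ 1 < g)
    ?_ ?_ ?_ ?_ ?_ a b
  · rintro ⟨g, hg, hgC, -⟩
    exact hgC ((QuotientGroup.eq_one_iff g).1 hg)
  · rintro _ _ ⟨g, rfl, hgC, hg⟩ ⟨h, rfl, hhC, hh⟩
    refine ⟨g * h, rfl, fun hm => ?_, hg.trans (lt_mul_of_one_lt_right' g hh)⟩
    exact (mul_lt_iff_lt_one_left'.1 (hC.1.1.lt_of_mem_of_one_lt hm hg hgC)).not_gt hh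
  · intro q hq
    obtain ⟨g, rfl⟩ := QuotientGroup.mk_surjective q
    have hgC : g ∉ C := fun h => hq ((QuotientGroup.eq_one_iff g).2 h)
    rcases lt_or_gt_of_ne (fun h : g = 1 => hgC (h ▸ C.one_mem)) with h | h
    · exact Or.inr ⟨g⁻¹, rfl, fun hm => hgC (by simpa using C.inv_mem hm), Left.one_lt_inv_iff.2 h⟩
    · exact Or.inl ⟨g, rfl, hgC, h⟩
  · rintro _ b ⟨g, rfl, hgC, hg⟩
    obtain ⟨h, rfl⟩ := QuotientGroup.mk_surjective b
    refine ⟨h⁻¹ * g * h, rfl, fun hm => hgC ?_,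
      by simpa using hc.one_lt_conj_of_notMem hC hg hgC h⁻¹⟩
    simpa [mul_assoc] using ‹C.Normal›.conj_mem _ hm h
  · rintro x _ ⟨e, rfl, heC, he⟩
    obtain ⟨u, rfl⟩ := QuotientGroup.mk_surjective x
    obtain ⟨n, hn, -⟩ := hc.exists_lt_pow_of_maximal hC he heC u
    refine ⟨n, ?_⟩
    by_cases hm : u⁻¹ * e ^ n ∈ C
    · exact Or.inl (by rw [← QuotientGroup.mk_pow]; exact QuotientGroup.eq.2 hm)
    · exact Or.inr ⟨u⁻¹ * e ^ n, rfl, hm, by rwa [lt_inv_mul_iff_mul_lt, mul_one]⟩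

theorem IsConradian.isSolvable (hc : IsConradian (G := G) (· < ·))
    (hfin : {C : Subgroup G | IsConvexSubgroup (· < ·) C}.Finite) : Group.IsSolvable G := by
  induction hn : {C : Subgroup G | IsConvexSubgroup (G := G) (· < ·) C}.ncard
    using Nat.strong_induction_on generalizing G with
  | _ n ih =>
    by_cases htriv : (⊤ : Subgroup G) = ⊥
    · exact Group.isSolvable_of_top_eq_bot G htriv
    obtain ⟨C, hC⟩ := (hfin.subset fun D (hD : _ ∧ _) => hD.1 :
        {D : Subgroup G | IsConvexSubgroup (· < ·) D ∧ D ≠ ⊤}.Finite).exists_maximal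
      ⟨⊥, isConvexSubgroup_bot, Ne.symm htriv⟩
    have hmaps := hC.1.1.mapsTo_map_subtype hC.1.2
    have hinj := Subgroup.map_injective C.subtype_injective
    have hcard : {D : Subgroup C | IsConvexSubgroup (· < ·) D}.ncard < n :=
      hn ▸ (Set.ncard_le_ncard_of_injOn _ hmaps hinj.injOn hfin.sdiff).trans_lt
        (Set.ncard_sdiff_singleton_lt_of_mem isConvexSubgroup_top hfin)
    have := hc.normal_of_maximal hC
    have hsolC : Group.IsSolvable C :=
      ih _ hcard (hc.subgroup C) ((hfin.sdiff.preimage hinj.injOn).subset hmaps) rfl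
    have hsolQ : Group.IsSolvable (G ⧸ C) :=
      Group.isSolvable_of_comm (hc.mul_comm_quotient_of_maximal hC)
    exact (Group.isSolvable_iff_subgroup_quotient C).2 ⟨hsolC, hsolQ⟩

end Conradian

/-- If a group admits a Conradian left order with only finitely many convex
subgroups, then the group is solvable. -/
theorem stmt_8 {G : Type*} [Group G] (r : G → G → Prop) (hr : IsLeftOrder r)
    (hc : IsConradian r)
    (hfin : {C : Subgroup G | IsConvexSubgroup r C}.Finite) :
    IsSolvable G := by
  let _ : LinearOrder G := @linearOrderOfSTO G r hr.1 (Classical.decRel r)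
  have : MulLeftStrictMono G := ⟨fun h _ _ hfg => hr.2 h _ _ hfg⟩
  exact hc.isSolvable hfin
end

section
/- For every n ≥ 2, no left-invariant total order on ℤ^n is isolated: for every left-invariant total order ≺ on ℤ^n and every finite subset S ⊆ ℤ^n, there exists a left-invariant total order ≺' on ℤ^n with ≺' ≠ ≺ that agrees with ≺ on S × S. -/
/-!
Sums of `≺`-positive elements are positive, so no nontrivial nonnegative integer combination of the
differences `-a + b` with `a ≺ b` in `S` vanishes. By Gordan's alternative (Fourier–Motzkin
elimination over `ℚ`, then clearing denominators) there is therefore a homomorphism `φ : ℤⁿ → ℤ`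
that is positive on all these differences. As `n ≥ 2`, `φ` has a nonzero kernel, so comparing first
by `φ` and breaking ties by `≺` or by its reverse gives two different left orders, both agreeing
with `≺` on `S`; one of them differs from `≺`.
-/

/-- A left-invariant total order (left order) on an additive group `G`. -/
def IsAddLeftOrder {G : Type*} [AddGroup G] (r : G → G → Prop) : Prop :=
  IsStrictTotalOrder G r ∧ ∀ h f g : G, r f g → r (h + f) (h + g)

open Finset Function Matrix

section StrictTotalOrder

variable {α : Type*}

theorem Std.Trichotomous.iff_of_imp_on {r r' : α → α → Prop} [Std.Trichotomous r]
    [IsStrictOrder α r'] {S : Set α} (h : ∀ a ∈ S, ∀ b ∈ S, r a b → r' a b) :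
    ∀ a ∈ S, ∀ b ∈ S, (r' a b ↔ r a b) := by
  refine fun a ha b hb => ⟨fun hab => ?_, h a ha b hb⟩
  rcases trichotomous_of r a b with h' | rfl | h'
  · exact h'
  · exact (irrefl a hab).elim
  · exact (asymm hab (h b hb a ha h')).elim

def lexOn {β : Type*} [LT β] (φ : α → β) (r : α → α → Prop) : α → α → Prop :=
  Prod.Lex (· < ·) r on fun a => (φ a, a)

variable {β : Type*} [LinearOrder β] {φ : α → β} {r : α → α → Prop}

theorem lexOn_iff {a b : α} : lexOn φ r a b ↔ φ a < φ b ∨ φ a = φ b ∧ r a b :=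
  Prod.lex_def

theorem isStrictTotalOrder_lexOn [IsStrictTotalOrder α r] : IsStrictTotalOrder α (lexOn φ r) :=
  haveI : IsStrictTotalOrder (β × α) (Prod.Lex (· < ·) r) := {}
  Injective.isStrictTotalOrder_onFun (f := fun a => (φ a, a)) _ fun _ _ h => congrArg Prod.snd h

theorem lexOn_ne_lexOn_swap [IsStrictTotalOrder α r] {a b : α} (hab : a ≠ b) (hφ : φ a = φ b) :
    lexOn φ r ≠ lexOn φ (Function.swap r) := by
  intro h
  have key : r a b ↔ r b a := by
    simpa [lexOn_iff, hφ, Function.swap] using congrFun₂ h a b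
  rcases trichotomous_of r a b with h' | h' | h'
  · exact asymm h' (key.1 h')
  · exact hab h'
  · exact asymm h' (key.2 h')

end StrictTotalOrder

section LeftOrder

variable {G : Type*} [AddGroup G] {r : G → G → Prop}

theorem IsAddLeftOrder.swap (hr : IsAddLeftOrder r) : IsAddLeftOrder (Function.swap r) :=
  haveI := hr.1
  ⟨inferInstance, fun h f g => hr.2 h g f⟩

theorem IsAddLeftOrder.lexOn {H : Type*} [AddZeroClass H] [LinearOrder H] [AddLeftStrictMono H]
    (φ : G →+ H) (hr : IsAddLeftOrder r) : IsAddLeftOrder (lexOn φ r) :=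
  haveI := hr.1
  ⟨isStrictTotalOrder_lexOn, fun h f g hfg => by
    simp only [lexOn_iff, map_add] at hfg ⊢
    rcases hfg with hlt | ⟨heq, hr'⟩
    · exact .inl (add_lt_add_right hlt _)
    · exact .inr ⟨by rw [heq], hr.2 h f g hr'⟩⟩

theorem IsAddLeftOrder.exists_ne_agreeOn_of_not_injective {H : Type*} [AddZeroClass H]
    [LinearOrder H] [AddLeftStrictMono H] (hr : IsAddLeftOrder r) {S : Set G} (φ : G →+ H)
    (hφS : ∀ a ∈ S, ∀ b ∈ S, r a b → φ a < φ b) (hφ : ¬ Injective φ) :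
    ∃ r', IsAddLeftOrder r' ∧ r' ≠ r ∧ ∀ a ∈ S, ∀ b ∈ S, (r' a b ↔ r a b) := by
  have := hr.1
  obtain ⟨a, b, hφab, hab⟩ := Function.not_injective_iff.1 hφ
  have agree {q : G → G → Prop} (hq : IsAddLeftOrder q) :
      ∀ a ∈ S, ∀ b ∈ S, (_root_.lexOn φ q a b ↔ r a b) :=
    haveI := (hq.lexOn φ).1
    Std.Trichotomous.iff_of_imp_on fun a ha b hb h => lexOn_iff.2 (.inl (hφS a ha b hb h))
  by_cases h : _root_.lexOn φ r = r
  · exact ⟨_, hr.swap.lexOn φ, fun h' => lexOn_ne_lexOn_swap hab hφab (h.trans h'.symm),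
      agree hr.swap⟩
  · exact ⟨_, hr.lexOn φ, h, agree hr⟩

theorem IsAddLeftOrder.rel_iff_zero_rel_neg_add (hr : IsAddLeftOrder r) {a b : G} :
    r a b ↔ r 0 (-a + b) :=
  ⟨fun h => by simpa using hr.2 (-a) a b h, fun h => by simpa using hr.2 a 0 (-a + b) h⟩

theorem IsAddLeftOrder.zero_rel_add (hr : IsAddLeftOrder r) {x y : G} (hx : r 0 x) (hy : r 0 y) :
    r 0 (x + y) :=
  hr.1.trans _ _ _ hx (by simpa using hr.2 x 0 y hy)

theorem IsAddLeftOrder.zero_rel_nsmul (hr : IsAddLeftOrder r) {x : G} (hx : r 0 x) {k : ℕ}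
    (hk : k ≠ 0) :
    r 0 (k • x) := by
  obtain ⟨k, rfl⟩ := Nat.exists_eq_add_one_of_ne_zero hk
  clear hk
  induction k with
  | zero => simpa using hx
  | succ k ih => simpa [succ_nsmul] using hr.zero_rel_add ih hx

end LeftOrder

theorem IsAddLeftOrder.zero_rel_sum_nsmul {G : Type*} [AddCommGroup G] {r : G → G → Prop}
    (hr : IsAddLeftOrder r) {ι : Type*} [Fintype ι] {t : ι → G} (ht : ∀ i, r 0 (t i)) {m : ι → ℕ}
    (hm : m ≠ 0) :
    r 0 (∑ i, m i • t i) := by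
  classical
  obtain ⟨i, hi⟩ := Function.ne_iff.1 hm
  rw [← sum_filter_of_ne (p := fun i => m i ≠ 0) fun i _ h hi => h (by simp [hi])]
  exact sum_induction_nonempty _ _ (fun _ _ => hr.zero_rel_add) ⟨i, by simpa using hi⟩
    fun i hi => hr.zero_rel_nsmul (ht i) (mem_filter.1 hi).2

theorem Fin.snoc_dotProduct {α : Type*} [NonUnitalNonAssocSemiring α] {n : ℕ} (x : Fin n → α)
    (t : α) (v : Fin (n + 1) → α) :
    (Fin.snoc x t : Fin (n + 1) → α) ⬝ᵥ v = x ⬝ᵥ Fin.init v + t * v (Fin.last n) := by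
  simp [dotProduct, Fin.sum_univ_castSucc, Fin.init]

theorem exists_forall_pos_add_mul {𝕜 : Type*} [Field 𝕜] [LinearOrder 𝕜] [IsStrictOrderedRing 𝕜]
    {ι : Type*} [Finite ι] {A l : ι → 𝕜}
    (h₀ : ∀ i, l i = 0 → 0 < A i)
    (h : ∀ p m, 0 < l p → l m < 0 → 0 < -l m * A p + l p * A m) :
    ∃ t, ∀ i, 0 < A i + t * l i := by
  obtain ⟨t, hlo, hhi⟩ := Set.Finite.exists_between'
    (Set.finite_range fun p : {i // 0 < l i} => -A p / l p)
    (Set.finite_range fun m : {i // l i < 0} => A m / -l m) (by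
      rintro _ ⟨p, rfl⟩ _ ⟨m, rfl⟩
      rw [div_lt_div_iff₀ p.2 (neg_pos.2 m.2)]
      linarith [h p m p.2 m.2])
  refine ⟨t, fun i => ?_⟩
  rcases lt_trichotomy (l i) 0 with hi | hi | hi
  · have := hhi _ ⟨⟨i, hi⟩, rfl⟩
    rw [lt_div_iff₀ (neg_pos.2 hi)] at this
    linarith
  · simpa [hi] using h₀ i hi
  · have := hlo _ ⟨⟨i, hi⟩, rfl⟩
    rw [div_lt_iff₀ hi] at this
    linarith

namespace FourierMotzkin

variable {R ι : Type*} [CommRing R] [LinearOrder R] (l : ι → R)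

/-- Indexes the extreme rays of the cone of nonnegative `c` with `c ⬝ᵥ l = 0`. -/
abbrev ElimIndex := {i // l i = 0} ⊕ {i // 0 < l i} × {i // l i < 0}

variable [DecidableEq ι]

def elimCoeff : ElimIndex l → ι → R
  | .inl i => Pi.single (i : ι) 1
  | .inr (p, m) => Pi.single (p : ι) (-l m) + Pi.single (m : ι) (l p)

variable {l}

theorem elimCoeff_ne_zero [IsStrictOrderedRing R] : ∀ k, elimCoeff l k ≠ 0
  | .inl _ => by simp [elimCoeff]
  | .inr (p, m) => fun h => by
    have hpm : (p : ι) ≠ m := fun h => (p.2.trans (h ▸ m.2)).false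
    have := congrFun h p
    simp [elimCoeff, Pi.single_eq_of_ne hpm] at this
    exact m.2.ne this

theorem elimCoeff_nonneg [IsStrictOrderedRing R] : ∀ k, 0 ≤ elimCoeff l k
  | .inl _ => Pi.single_nonneg.2 zero_le_one
  | .inr (p, m) =>
    add_nonneg (Pi.single_nonneg.2 (neg_nonneg.2 m.2.le)) (Pi.single_nonneg.2 p.2.le)

variable [Fintype ι]

theorem elimCoeff_dotProduct (A : ι → R) :
    ∀ k, elimCoeff l k ⬝ᵥ A = match k with
      | .inl i => A i
      | .inr (p, m) => -l m * A p + l p * A m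
  | .inl _ => by simp [elimCoeff]
  | .inr _ => by simp [elimCoeff]

theorem elimCoeff_dotProduct_self (k : ElimIndex l) : elimCoeff l k ⬝ᵥ l = 0 := by
  rw [elimCoeff_dotProduct]
  rcases k with i | ⟨p, m⟩
  · exact i.2
  · ring

variable {n : ℕ} (v : ι → Fin (n + 1) → R)

def elimComb (k : ElimIndex fun i => v i (Fin.last n)) : Fin (n + 1) → R :=
  ∑ i, elimCoeff _ k i • v i

theorem elimComb_last (k) : elimComb v k (Fin.last n) = 0 := by
  simpa [elimComb, Finset.sum_apply, dotProduct] using elimCoeff_dotProduct_self k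

theorem dotProduct_init_elimComb (y : Fin n → R) (k) :
    y ⬝ᵥ Fin.init (elimComb v k) = elimCoeff _ k ⬝ᵥ fun i => y ⬝ᵥ Fin.init (v i) := by
  simp only [elimComb, dotProduct, Fin.init, Finset.sum_apply, Pi.smul_apply, smul_eq_mul,
    Finset.mul_sum]
  rw [Finset.sum_comm]
  simp only [mul_left_comm]

variable {𝕜 : Type*} [Field 𝕜] [LinearOrder 𝕜] [IsStrictOrderedRing 𝕜] {v : ι → Fin (n + 1) → 𝕜}

theorem exists_snoc_dotProduct_pos {y : Fin n → 𝕜} (hy : ∀ k, 0 < y ⬝ᵥ Fin.init (elimComb v k)) :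
    ∃ t, ∀ i, 0 < (Fin.snoc y t : Fin (n + 1) → 𝕜) ⬝ᵥ v i := by
  simp only [dotProduct_init_elimComb, elimCoeff_dotProduct] at hy
  obtain ⟨t, ht⟩ := exists_forall_pos_add_mul (A := fun i => y ⬝ᵥ Fin.init (v i))
    (fun i hi => hy (.inl ⟨i, hi⟩)) (fun p m hp hm => hy (.inr (⟨p, hp⟩, ⟨m, hm⟩)))
  exact ⟨t, fun i => (Fin.snoc_dotProduct y t (v i)).symm ▸ ht i⟩

theorem exists_sum_smul_eq_zero {c : ElimIndex (fun i => v i (Fin.last n)) → 𝕜} (hc₀ : 0 ≤ c)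
    (hc : c ≠ 0) (hsum : ∑ k, c k • Fin.init (elimComb v k) = 0) :
    ∃ c' : ι → 𝕜, 0 ≤ c' ∧ c' ≠ 0 ∧ ∑ i, c' i • v i = 0 := by
  refine ⟨∑ k, c k • elimCoeff _ k, sum_nonneg fun k _ => smul_nonneg (hc₀ k) (elimCoeff_nonneg k),
    fun h => ?_, ?_⟩
  · obtain ⟨k, hk⟩ := Function.ne_iff.1 hc
    rw [sum_eq_zero_iff_of_nonneg fun k _ => smul_nonneg (hc₀ k) (elimCoeff_nonneg k)] at h
    exact (smul_eq_zero.1 (h k (mem_univ k))).elim hk (elimCoeff_ne_zero k)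
  · have : ∑ i, (∑ k, c k • elimCoeff _ k) i • v i = ∑ k, c k • elimComb v k := by
      simp only [elimComb, Finset.sum_apply, Pi.smul_apply, smul_sum, sum_smul, smul_smul]
      exact sum_comm
    rw [this]
    ext j
    induction j using Fin.lastCases with
    | last => simp [Finset.sum_apply, elimComb_last]
    | cast j => simpa [Finset.sum_apply, Fin.init] using congrFun hsum j

end FourierMotzkin

open FourierMotzkin in
theorem exists_dotProduct_pos_or_sum_smul_eq_zero {𝕜 : Type*} [Field 𝕜] [LinearOrder 𝕜]
    [IsStrictOrderedRing 𝕜] {n : ℕ} {ι : Type*} [Fintype ι] (v : ι → Fin n → 𝕜) :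
    (∃ y, ∀ i, 0 < y ⬝ᵥ v i) ∨ ∃ c : ι → 𝕜, 0 ≤ c ∧ c ≠ 0 ∧ ∑ i, c i • v i = 0 := by
  classical
  induction n generalizing ι with
  | zero =>
    cases isEmpty_or_nonempty ι with
    | inl _ => exact .inl ⟨0, isEmptyElim⟩
    | inr h =>
      obtain ⟨i⟩ := h
      exact .inr ⟨Pi.single i 1, Pi.single_nonneg.2 zero_le_one, by simp, Subsingleton.elim _ _⟩
  | succ n ih =>
    rcases ih fun k => Fin.init (elimComb v k) with ⟨y, hy⟩ | ⟨c, hc₀, hc, hsum⟩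
    · obtain ⟨t, ht⟩ := exists_snoc_dotProduct_pos hy
      exact .inl ⟨_, ht⟩
    · exact .inr (exists_sum_smul_eq_zero hc₀ hc hsum)

theorem exists_nat_mul_eq_intCast {ι : Type*} [Fintype ι] (q : ι → ℚ) :
    ∃ N : ℕ, 0 < N ∧ ∃ z : ι → ℤ, ∀ i, (N : ℚ) * q i = z i := by
  refine ⟨∏ i, (q i).den, prod_pos fun i _ => (q i).den_pos, ?_⟩
  choose k hk using fun i => dvd_prod_of_mem (fun i => (q i).den) (mem_univ i)
  refine ⟨fun i => k i * (q i).num, fun i => ?_⟩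
  rw [hk i]
  push_cast
  rw [mul_comm ((q i).den : ℚ), mul_assoc, Rat.den_mul_eq_num]

theorem exists_dotProduct_pos_or_sum_nsmul_eq_zero {n : ℕ} {ι : Type*} [Fintype ι]
    (t : ι → Fin n → ℤ) :
    (∃ z : Fin n → ℤ, ∀ i, 0 < z ⬝ᵥ t i) ∨ ∃ m : ι → ℕ, m ≠ 0 ∧ ∑ i, m i • t i = 0 := by
  rcases exists_dotProduct_pos_or_sum_smul_eq_zero fun i j => (t i j : ℚ) with
    ⟨y, hy⟩ | ⟨c, hc₀, hc, hsum⟩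
  · obtain ⟨N, hN, z, hz⟩ := exists_nat_mul_eq_intCast y
    refine .inl ⟨z, fun i => ?_⟩
    have : ((z ⬝ᵥ t i : ℤ) : ℚ) = N * (y ⬝ᵥ fun j => (t i j : ℚ)) := by
      simp only [dotProduct, Int.cast_sum, Int.cast_mul, ← hz, mul_sum, mul_assoc]
    exact_mod_cast this ▸ mul_pos (Nat.cast_pos.2 hN) (hy i)
  · obtain ⟨N, hN, m, hm⟩ := exists_nat_mul_eq_intCast c
    lift m to ι → ℕ using fun i => Int.cast_nonneg_iff.1 (hm i ▸ mul_nonneg N.cast_nonneg (hc₀ i))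
    simp only [Int.cast_natCast] at hm
    refine .inr ⟨m, fun h => hc (funext fun i => ?_), funext fun j => ?_⟩
    · simpa [h, hN.ne'] using hm i
    · have h0 : ∑ i, c i * t i j = 0 := by simpa using congrFun hsum j
      have : ∑ i, (m i : ℚ) * t i j = N * ∑ i, c i * t i j := by
        simp only [mul_sum, ← mul_assoc, hm]
      rw [h0, mul_zero] at this
      simpa using (by exact_mod_cast this : ∑ i, (m i : ℤ) * t i j = 0)

theorem not_injective_of_two_le {n : ℕ} (hn : 2 ≤ n) (φ : (Fin n → ℤ) →+ ℤ) : ¬ Injective φ :=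
  fun h => by
    have := LinearMap.finrank_le_finrank_of_injective (f := φ.toIntLinearMap) h
    simp only [Module.finrank_fin_fun, Module.finrank_self] at this
    omega

theorem IsAddLeftOrder.exists_addMonoidHom_lt {n : ℕ} {r : (Fin n → ℤ) → (Fin n → ℤ) → Prop}
    (hr : IsAddLeftOrder r) (S : Finset (Fin n → ℤ)) :
    ∃ φ : (Fin n → ℤ) →+ ℤ, ∀ a ∈ S, ∀ b ∈ S, r a b → φ a < φ b := by
  classical
  let P := (S ×ˢ S).filter fun p => r p.1 p.2
  have hP (p : P) : r 0 (-p.1.1 + p.1.2) := hr.rel_iff_zero_rel_neg_add.1 (mem_filter.1 p.2).2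
  rcases exists_dotProduct_pos_or_sum_nsmul_eq_zero fun p : P => -p.1.1 + p.1.2 with
    ⟨z, hz⟩ | ⟨m, hm, hsum⟩
  · refine ⟨AddMonoidHom.mk' (z ⬝ᵥ ·) (dotProduct_add z), fun a ha b hb hab => ?_⟩
    have := hz ⟨(a, b), mem_filter.2 ⟨mem_product.2 ⟨ha, hb⟩, hab⟩⟩
    simp only [dotProduct_add, dotProduct_neg] at this
    simp only [AddMonoidHom.mk'_apply]
    linarith
  · have := hr.zero_rel_sum_nsmul hP hm
    rw [hsum] at this
    exact (hr.1.irrefl 0 this).elim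

/-- For `n ≥ 2`, no left order on `ℤⁿ` is isolated: any left order is
approximated by distinct left orders agreeing with it on any given finite set. -/
theorem stmt_15 (n : ℕ) (hn : 2 ≤ n) (r : (Fin n → ℤ) → (Fin n → ℤ) → Prop)
    (hr : IsAddLeftOrder r) (S : Finset (Fin n → ℤ)) :
    ∃ r' : (Fin n → ℤ) → (Fin n → ℤ) → Prop, IsAddLeftOrder r' ∧ r' ≠ r ∧
      ∀ a ∈ S, ∀ b ∈ S, (r' a b ↔ r a b) := by
  obtain ⟨φ, hφ⟩ := hr.exists_addMonoidHom_lt S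
  exact hr.exists_ne_agreeOn_of_not_injective φ hφ (not_injective_of_two_le hn φ)
end

section
/- There is exactly one left-invariant total order ≺ on the braid group B_3 satisfying 1 ≺ σ1σ2 and 1 ≺ σ2^{-1}. -/
/-!
Write `u = σ₁σ₂`, `Δ = σ₁σ₂σ₁` and `z = Δ²`. Then `u³ = z` is central and every braid has a unique
normal form `z ^ t * w`, where `w` is a word in the syllables `u`, `u²`, `Δ` alternating between
`u`-syllables and `Δ` (as `B₃ / ⟨z⟩ ≅ ℤ/3 * ℤ/2`); uniqueness comes from letting `B₃` act on normal
forms. Since `Δ = u² σ₂⁻¹` and `uΔ = z σ₂⁻¹`, the monoid `P` generated by `u` and `σ₂⁻¹` consists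
exactly of the normal forms whose index `t + #(Δ's of w not in first position)` is nonnegative.
Inversion sends the index `i` to `-1 - i` (to `-i` if `w` is empty), so for `g ≠ 1` exactly one of
`g`, `g⁻¹` lies in `P`. Thus `P \ {1}` is the positive cone of a left order; any left order making
`u` and `σ₂⁻¹` positive has a positive cone containing `P \ {1}`, hence equal to it since
`P ∪ P⁻¹ = B₃`.
-/

section LeftOrder

variable {G : Type*} [Group G]

theorem isLeftOrder_of_submonoid {P : Submonoid G} (htot : ∀ g, g ∈ P ∨ g⁻¹ ∈ P)
    (hanti : ∀ g ∈ P, g⁻¹ ∈ P → g = 1) :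
    IsLeftOrder fun f g : G => f⁻¹ * g ∈ P ∧ f ≠ g := by
  have trans (a b c : G) (hab : a⁻¹ * b ∈ P ∧ a ≠ b) (hbc : b⁻¹ * c ∈ P ∧ b ≠ c) :
      a⁻¹ * c ∈ P ∧ a ≠ c := by
    refine ⟨by simpa [mul_assoc] using mul_mem hab.1 hbc.1, ?_⟩
    rintro rfl
    exact hab.2 (inv_mul_eq_one.1 (hanti _ hab.1 (by simpa using hbc.1)))
  refine ⟨{ trichotomous a b hab hba := ?_, irrefl _ h := h.2 rfl, trans }, ?_⟩
  · by_contra hne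
    rcases htot (a⁻¹ * b) with h | h
    · exact hab ⟨h, hne⟩
    · exact hba ⟨by simpa using h, Ne.symm hne⟩
  · rintro h f g ⟨hfg, hne⟩
    exact ⟨by simpa [mul_assoc] using hfg, fun e => hne (mul_left_cancel e)⟩

namespace IsLeftOrder

variable {r : G → G → Prop}

theorem rel_iff_one_rel (hr : IsLeftOrder r) {f g : G} : r f g ↔ r 1 (f⁻¹ * g) :=
  ⟨fun h => by simpa using hr.2 f⁻¹ f g h, fun h => by simpa using hr.2 f 1 _ h⟩

theorem one_rel_of_mem_closure (hr : IsLeftOrder r) {S : Set G} (hS : ∀ s ∈ S, r 1 s) {g : G}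
    (hg : g ∈ Submonoid.closure S) (hne : g ≠ 1) : r 1 g := by
  have := hr.1
  suffices ∀ g ∈ Submonoid.closure S, g = 1 ∨ r 1 g from (this g hg).resolve_left hne
  intro g hg
  induction hg using Submonoid.closure_induction_left with
  | one => exact .inl rfl
  | mul_left s hs y _ ih =>
    right
    rcases ih with rfl | hy
    · simpa using hS s hs
    · exact _root_.trans (hS s hs) (by simpa using hr.2 s 1 y hy)

theorem eq_of_forall_one_rel (hr : IsLeftOrder r) {S : Set G} (hS : ∀ s ∈ S, r 1 s)
    (htot : ∀ g, g ∈ Submonoid.closure S ∨ g⁻¹ ∈ Submonoid.closure S) :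
    r = fun f g => f⁻¹ * g ∈ Submonoid.closure S ∧ f ≠ g := by
  have := hr.1
  have one_rel_iff (w : G) (hw : w ≠ 1) : r 1 w ↔ w ∈ Submonoid.closure S := by
    refine ⟨fun h => (htot w).resolve_right fun hinv => ?_,
      fun h => hr.one_rel_of_mem_closure hS h hw⟩
    have : r w 1 := by
      simpa using hr.2 w 1 _ (hr.one_rel_of_mem_closure hS hinv (inv_ne_one.2 hw))
    exact asymm h this
  funext f g
  by_cases hfg : f = g
  · subst hfg
    simpa using irrefl f
  · rw [hr.rel_iff_one_rel, one_rel_iff _ (mt inv_mul_eq_one.1 hfg)]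
    simp [hfg]

end IsLeftOrder

theorem existsUnique_isLeftOrder_of_closure {S : Set G} (h1 : 1 ∉ S)
    (htot : ∀ g, g ∈ Submonoid.closure S ∨ g⁻¹ ∈ Submonoid.closure S)
    (hanti : ∀ g ∈ Submonoid.closure S, g⁻¹ ∈ Submonoid.closure S → g = 1) :
    ∃! r : G → G → Prop, IsLeftOrder r ∧ ∀ s ∈ S, r 1 s :=
  ⟨_, ⟨isLeftOrder_of_submonoid htot hanti, fun s hs =>
      ⟨by simpa using Submonoid.subset_closure hs, fun e => h1 (e ▸ hs)⟩⟩,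
    fun _ ⟨hr, hS⟩ => hr.eq_of_forall_one_rel hS htot⟩

end LeftOrder

namespace B₃

theorem braid_rel : σ₁ * σ₂ * σ₁ = σ₂ * σ₁ * σ₂ := by
  have h := PresentedGroup.one_of_mem (rels := braidRels3) (Set.mem_singleton _)
  rwa [map_mul, map_mul, map_inv, map_mul, map_mul, mul_inv_eq_one] at h

def u : B₃ := σ₁ * σ₂

def Δ : B₃ := σ₁ * σ₂ * σ₁

def z : B₃ := Δ * Δ

theorem u_mul_u_mul_u : u * u * u = z :=
  calc u * u * u = Δ * (σ₂ * σ₁ * σ₂) := by rw [u, Δ]; group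
    _ = z := by rw [← braid_rel]; rfl

theorem σ₁_eq : σ₁ = u⁻¹ * Δ := by rw [u, Δ]; group

theorem σ₂_eq : σ₂ = Δ⁻¹ * (u * u) := by
  rw [u, Δ]; group

theorem σ₂_inv_eq : σ₂⁻¹ = z⁻¹ * (u * Δ) := by
  rw [σ₂_eq, ← u_mul_u_mul_u]; group

theorem commute_z_u : Commute z u := by
  rw [← u_mul_u_mul_u]
  exact ((Commute.refl u).mul_left (Commute.refl u)).mul_left (Commute.refl u)

theorem commute_z_Δ : Commute z Δ := (Commute.refl Δ).mul_left (Commute.refl Δ)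

theorem closure_u_Δ : Subgroup.closure {u, Δ} = ⊤ := by
  have hu : u ∈ Subgroup.closure {u, Δ} := Subgroup.subset_closure (by simp)
  have hΔ : Δ ∈ Subgroup.closure {u, Δ} := Subgroup.subset_closure (by simp)
  refine eq_top_iff.2 fun g _ => PresentedGroup.generated_by _ _ (fun i => ?_) g
  fin_cases i
  · change σ₁ ∈ _
    exact σ₁_eq ▸ mul_mem (inv_mem hu) hΔ
  · change σ₂ ∈ _
    exact σ₂_eq ▸ mul_mem (inv_mem hΔ) (mul_mem hu hu)

theorem commute_z (g : B₃) : Commute z g := by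
  have : Subgroup.closure {u, Δ} ≤ Subgroup.centralizer {z} := by
    rw [Subgroup.closure_le]
    rintro _ (rfl | rfl)
    · exact Subgroup.mem_centralizer_singleton_iff.2 commute_z_u.eq.symm
    · exact Subgroup.mem_centralizer_singleton_iff.2 commute_z_Δ.eq.symm
  exact (Subgroup.mem_centralizer_singleton_iff.1 (this (closure_u_Δ ▸ Subgroup.mem_top g))).symm

end B₃

namespace B₃

inductive Syllable
  | u1 | u2 | d
  deriving DecidableEq

namespace Syllable

def isD : Syllable → Bool
  | d => true
  | _ => false

def eval : Syllable → B₃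
  | u1 => u
  | u2 => u * u
  | d => Δ

end Syllable

open Syllable

def Alternating (l : List Syllable) : Prop := l.IsChain fun a b => a.isD ≠ b.isD

theorem Alternating.isD_ne {a b : Syllable} {l : List Syllable} (h : Alternating (a :: b :: l)) :
    a.isD ≠ b.isD :=
  (List.isChain_cons_cons.1 h).1

@[ext]
structure NF where
  exp : ℤ
  word : List Syllable
  alternating : Alternating word

namespace NF

def one : NF := ⟨0, [], .nil⟩

def shift (n : ℤ) (x : NF) : NF := ⟨x.exp + n, x.word, x.alternating⟩

def mulU : NF → NF
  | ⟨t, [], _⟩ => ⟨t, [u1], .singleton _⟩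
  | ⟨t, u1 :: r, h⟩ => ⟨t, u2 :: r, by simpa [Alternating, List.isChain_cons, isD] using h⟩
  | ⟨t, u2 :: r, h⟩ => ⟨t + 1, r, h.tail⟩
  | ⟨t, d :: r, h⟩ => ⟨t, u1 :: d :: r, h.cons_cons (by decide)⟩

def mulΔ : NF → NF
  | ⟨t, [], _⟩ => ⟨t, [d], .singleton _⟩
  | ⟨t, u1 :: r, h⟩ => ⟨t, d :: u1 :: r, h.cons_cons (by decide)⟩
  | ⟨t, u2 :: r, h⟩ => ⟨t, d :: u2 :: r, h.cons_cons (by decide)⟩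
  | ⟨t, d :: r, h⟩ => ⟨t + 1, r, h.tail⟩

theorem mulU_mulU_mulU (x : NF) : mulU (mulU (mulU x)) = x.shift 1 := by
  rcases x with ⟨t, _ | ⟨_ | _ | _, _ | ⟨_ | _ | _, r⟩⟩, h⟩ <;>
    simp [mulU, shift] <;> exact absurd h.isD_ne (by decide)

theorem mulΔ_mulΔ (x : NF) : mulΔ (mulΔ x) = x.shift 1 := by
  rcases x with ⟨t, _ | ⟨_ | _ | _, _ | ⟨_ | _ | _, r⟩⟩, h⟩ <;>
    simp [mulΔ, shift]
  exact absurd h.isD_ne (by decide)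

@[simp]
theorem shift_zero (x : NF) : x.shift 0 = x := by simp [shift]

theorem shift_shift (m n : ℤ) (x : NF) : (x.shift m).shift n = x.shift (m + n) := by
  simp [shift, add_assoc]

theorem shift_bijective (n : ℤ) : Function.Bijective (shift n) :=
  Function.bijective_iff_has_inverse.2
    ⟨shift (-n), fun x => by simp [shift_shift], fun x => by simp [shift_shift]⟩

theorem mulU_bijective : Function.Bijective mulU := by
  have h : mulU ∘ mulU ∘ mulU = shift 1 := funext mulU_mulU_mulU
  exact ⟨(h ▸ (shift_bijective 1).1).of_comp.of_comp, (h ▸ (shift_bijective 1).2).of_comp⟩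

theorem mulΔ_bijective : Function.Bijective mulΔ := by
  have h : mulΔ ∘ mulΔ = shift 1 := funext mulΔ_mulΔ
  exact ⟨(h ▸ (shift_bijective 1).1).of_comp, (h ▸ (shift_bijective 1).2).of_comp⟩

noncomputable def permU : Equiv.Perm NF := Equiv.ofBijective _ mulU_bijective

noncomputable def permΔ : Equiv.Perm NF := Equiv.ofBijective _ mulΔ_bijective

theorem permU_pow_three : permU ^ 3 = permΔ ^ 2 := by
  ext1 x
  simp [pow_succ, permU, permΔ, mulU_mulU_mulU, mulΔ_mulΔ]

end NF

open NF

theorem braid_rel_perm : FreeGroup.lift ![permU⁻¹ * permΔ, permΔ⁻¹ * permU ^ 2]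
    (FreeGroup.of 0 * FreeGroup.of 1 * FreeGroup.of 0 *
      (FreeGroup.of 1 * FreeGroup.of 0 * FreeGroup.of 1)⁻¹) = 1 := by
  simp only [map_mul, map_inv, FreeGroup.lift_apply_of, Matrix.cons_val_zero, Matrix.cons_val_one,
    mul_inv_eq_one]
  calc _ = permΔ := by group
    _ = permΔ⁻¹ * permU ^ 3 := by rw [permU_pow_three]; group
    _ = _ := by group

noncomputable def act : B₃ →* Equiv.Perm NF :=
  PresentedGroup.toGroup fun _ h => h ▸ braid_rel_perm

theorem act_σ₁ : act σ₁ = permU⁻¹ * permΔ := PresentedGroup.toGroup.of _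

theorem act_σ₂ : act σ₂ = permΔ⁻¹ * permU ^ 2 := PresentedGroup.toGroup.of _

theorem act_u : act u = permU := by
  rw [u, map_mul, act_σ₁, act_σ₂]; group

theorem act_Δ : act Δ = permΔ := by
  rw [Δ, map_mul, map_mul, act_σ₁, act_σ₂]; group

theorem act_z_zpow_apply (n : ℤ) (x : NF) : act (z ^ n) x = x.shift n := by
  have act_z (y : NF) : act z y = y.shift 1 := by
    rw [z, map_mul, act_Δ, Equiv.Perm.mul_apply]; exact mulΔ_mulΔ y
  induction n using Int.induction_on generalizing x with
  | zero => simp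
  | succ n ih =>
    rw [zpow_add_one, map_mul, Equiv.Perm.mul_apply, act_z, ih, shift_shift, add_comm]
  | pred n ih =>
    have : (act z)⁻¹ x = x.shift (-1) := by
      rw [Equiv.Perm.inv_eq_iff_eq, act_z, shift_shift, neg_add_cancel, shift_zero]
    rw [zpow_sub_one, map_mul, map_inv, Equiv.Perm.mul_apply, this, ih, shift_shift,
      neg_add_eq_sub]

def eval (x : NF) : B₃ := z ^ x.exp * (x.word.map Syllable.eval).prod

noncomputable def nf (g : B₃) : NF := act g NF.one

theorem eval_mulU (x : NF) : eval (mulU x) = u * eval x := by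
  rcases x with ⟨t, _ | ⟨_ | _ | _, r⟩, h⟩ <;>
    simp only [mulU, eval, List.map_cons, List.map_nil, List.prod_cons, List.prod_nil,
      Syllable.eval, ← ((commute_z u).zpow_left t).left_comm] <;>
    simp [zpow_add_one, ← u_mul_u_mul_u, mul_assoc]

theorem eval_mulΔ (x : NF) : eval (mulΔ x) = Δ * eval x := by
  rcases x with ⟨t, _ | ⟨_ | _ | _, r⟩, h⟩ <;>
    simp only [mulΔ, eval, List.map_cons, List.map_nil, List.prod_cons, List.prod_nil,
      Syllable.eval, ← ((commute_z Δ).zpow_left t).left_comm]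
  simp [zpow_add_one, z, mul_assoc]

theorem eval_act (g : B₃) (x : NF) : eval (act g x) = g * eval x := by
  have hg : g ∈ Subgroup.closure {u, Δ} := closure_u_Δ ▸ Subgroup.mem_top g
  induction hg using Subgroup.closure_induction generalizing x with
  | mem g hg =>
    rcases hg with rfl | rfl
    · exact act_u ▸ eval_mulU x
    · exact act_Δ ▸ eval_mulΔ x
  | one => simp
  | mul g h _ _ ihg ihh => rw [map_mul, Equiv.Perm.mul_apply, ihg, ihh, mul_assoc]
  | inv g _ ih =>
    rw [eq_inv_mul_iff_mul_eq, ← ih, ← Equiv.Perm.mul_apply, ← map_mul, mul_inv_cancel,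
      map_one, Equiv.Perm.one_apply]

theorem eval_nf (g : B₃) : eval (nf g) = g := by
  rw [nf, eval_act]; simp [eval, NF.one]

theorem act_eval_cons {s : Syllable} {w : List Syllable} (h : Alternating (s :: w)) (t : ℤ) :
    act s.eval ⟨t, w, h.tail⟩ = ⟨t, s :: w, h⟩ := by
  cases s <;> rcases w with _ | ⟨_ | _ | _, r⟩ <;>
    simp [Syllable.eval, act_u, act_Δ, permU, permΔ, mulU, mulΔ] <;>
    exact absurd h.isD_ne (by decide)

theorem act_prod_eval (w : List Syllable) (h : Alternating w) (t : ℤ) :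
    act (w.map Syllable.eval).prod ⟨t, [], .nil⟩ = ⟨t, w, h⟩ := by
  induction w with
  | nil => rfl
  | cons s w ih =>
    rw [List.map_cons, List.prod_cons, map_mul, Equiv.Perm.mul_apply, ih h.tail, act_eval_cons]

theorem nf_eval (x : NF) : nf (eval x) = x := by
  rw [nf, eval, map_mul, Equiv.Perm.mul_apply, NF.one, act_prod_eval _ x.alternating,
    act_z_zpow_apply]
  simp [shift]

theorem eval_injective : Function.Injective eval := Function.LeftInverse.injective nf_eval

def Syllable.swap : Syllable → Syllable
  | u1 => u2
  | u2 => u1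
  | d => d

theorem Syllable.swap_involutive : Function.Involutive Syllable.swap := fun s => by
  cases s <;> rfl

theorem Syllable.eval_inv (s : Syllable) : s.eval⁻¹ = z⁻¹ * s.swap.eval := by
  cases s <;> simp only [swap, Syllable.eval]
  · rw [← u_mul_u_mul_u]; group
  · rw [← u_mul_u_mul_u]; group
  · rw [z]; group

theorem Alternating.reverse_map_swap {w : List Syllable} (h : Alternating w) :
    Alternating (w.map Syllable.swap).reverse := by
  rw [Alternating, List.isChain_reverse, List.isChain_map]
  refine h.imp fun a b hab => ?_
  cases a <;> cases b <;> simp_all [Syllable.swap, isD]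

def NF.inv (x : NF) : NF :=
  ⟨-x.exp - x.word.length, (x.word.map Syllable.swap).reverse, x.alternating.reverse_map_swap⟩

theorem prod_eval_inv (w : List Syllable) :
    (w.map Syllable.eval).prod⁻¹ = z ^ (-(w.length : ℤ)) *
      ((w.map Syllable.swap).reverse.map Syllable.eval).prod := by
  induction w with
  | nil => simp
  | cons s w ih =>
    simp only [List.map_cons, List.prod_cons, mul_inv_rev, ih, List.reverse_cons, List.map_append,
      List.prod_append, List.map_nil, List.prod_cons, List.prod_nil, Syllable.eval_inv, mul_one]
    rw [mul_assoc, ← (commute_z _).inv_left.left_comm, ← mul_assoc, ← zpow_neg_one, ← zpow_add,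
      List.length_cons, Nat.cast_succ, neg_add]

theorem eval_inv (x : NF) : eval x.inv = (eval x)⁻¹ := by
  rw [eval, eval, NF.inv, mul_inv_rev, prod_eval_inv, ← zpow_neg, mul_assoc,
    ← ((commute_z _).zpow_left _).eq, ← mul_assoc, ← zpow_add, add_comm, sub_eq_add_neg]

theorem nf_inv (g : B₃) : nf g⁻¹ = (nf g).inv :=
  eval_injective (by rw [eval_nf, eval_inv, eval_nf])

theorem Alternating.count_tail_add_count_dropLast {w : List Syllable} (h : Alternating w)
    (hw : w ≠ []) : w.tail.count d + w.dropLast.count d + 1 = w.length := by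
  induction w using List.twoStepInduction with
  | nil => contradiction
  | singleton a => simp
  | cons_cons a b r _ ih =>
    have hab := h.isD_ne
    have := ih b h.tail (List.cons_ne_nil _ _)
    simp only [List.tail_cons, List.dropLast_cons_cons, List.length_cons, List.count_cons] at this ⊢
    cases a <;> cases b <;> simp_all [isD] <;> omega

namespace NF

def index (x : NF) : ℤ := x.exp + x.word.tail.count d

theorem index_add_index_inv {x : NF} (hx : x.word ≠ []) : x.index + x.inv.index = -1 := by
  have := x.alternating.count_tail_add_count_dropLast hx
  have hcount : ((x.word.map Syllable.swap).reverse.tail.count d) = x.word.dropLast.count d := by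
    rw [List.tail_reverse, List.count_reverse, ← List.map_dropLast]
    exact List.count_map_of_injective _ _ Syllable.swap_involutive.injective d
  simp only [index, inv, hcount]
  omega

theorem index_inv_of_word_eq_nil {x : NF} (hx : x.word = []) : x.inv.index = -x.index := by
  simp [index, inv, hx]

theorem index_nonneg_or_index_inv_nonneg (x : NF) : 0 ≤ x.index ∨ 0 ≤ x.inv.index := by
  by_cases hx : x.word = []
  · rw [index_inv_of_word_eq_nil hx]; omega
  · have := index_add_index_inv hx; omega

theorem eq_one_of_index_nonneg_of_index_inv_nonneg {x : NF} (h : 0 ≤ x.index)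
    (hinv : 0 ≤ x.inv.index) : x = one := by
  by_cases hx : x.word = []
  · rw [index_inv_of_word_eq_nil hx] at hinv
    refine NF.ext ?_ hx
    simp only [index, hx, List.tail_nil, List.count_nil] at h hinv
    simp only [one]
    omega
  · have := index_add_index_inv hx; omega

end NF

def cone : Submonoid B₃ := Submonoid.closure {u, σ₂⁻¹}

theorem u_mem_cone : u ∈ cone := Submonoid.subset_closure (by simp)

theorem σ₂_inv_mem_cone : σ₂⁻¹ ∈ cone := Submonoid.subset_closure (by simp)

theorem z_mem_cone : z ∈ cone :=
  u_mul_u_mul_u ▸ mul_mem (mul_mem u_mem_cone u_mem_cone) u_mem_cone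

theorem Δ_mem_cone : Δ ∈ cone := by
  have : Δ = u * u * σ₂⁻¹ := by rw [u, Δ]; group
  exact this ▸ mul_mem (mul_mem u_mem_cone u_mem_cone) σ₂_inv_mem_cone

theorem u_mul_Δ : u * Δ = z * σ₂⁻¹ := by rw [σ₂_inv_eq]; group

namespace NF

theorem index_shift (n : ℤ) (x : NF) : (x.shift n).index = x.index + n := by
  simp only [index, shift]; ring

theorem index_le_index_mulU (x : NF) : x.index ≤ (mulU x).index := by
  rcases x with ⟨t, _ | ⟨_ | _ | _, _ | ⟨_ | _ | _, r⟩⟩, h⟩ <;> simp [mulU, index]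
  omega

theorem index_le_index_mulU_mulΔ (x : NF) : x.index + 1 ≤ (mulU (mulΔ x)).index := by
  rcases x with ⟨t, _ | ⟨_ | _ | _, _ | ⟨_ | _ | _, _ | ⟨_ | _ | _, r⟩⟩⟩, h⟩ <;>
    simp [mulU, mulΔ, index]
  omega

end NF

theorem act_σ₂_inv_apply (x : NF) : act σ₂⁻¹ x = (mulU (mulΔ x)).shift (-1) := by
  rw [σ₂_inv_eq, ← zpow_neg_one, map_mul, Equiv.Perm.mul_apply, act_z_zpow_apply, map_mul, act_u,
    act_Δ]
  rfl

theorem index_le_index_act_of_mem_cone {g : B₃} (hg : g ∈ cone) (x : NF) :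
    x.index ≤ (act g x).index := by
  induction hg using Submonoid.closure_induction generalizing x with
  | mem g hg =>
    rcases hg with rfl | rfl
    · rw [act_u]; exact index_le_index_mulU x
    · rw [act_σ₂_inv_apply, index_shift]
      linarith [index_le_index_mulU_mulΔ x]
  | one => simp
  | mul g h _ _ ihg ihh => 
    rw [map_mul, Equiv.Perm.mul_apply]
    exact (ihh x).trans (ihg _)

theorem Alternating.count_tail_eq_count {r : List Syllable} (h : Alternating (d :: r)) :
    r.tail.count d = r.count d := by
  rcases r with _ | ⟨_ | _ | _, r⟩
  · rfl
  · simp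
  · simp
  · exact absurd h.isD_ne (by decide)

theorem exists_prod_eval_eq_z_pow_mul {w : List Syllable} (h : Alternating w) :
    ∃ s ∈ cone, (w.map Syllable.eval).prod = z ^ w.tail.count d * s := by
  induction w using List.twoStepInduction with
  | nil => exact ⟨1, one_mem _, by simp⟩
  | singleton a =>
    refine ⟨a.eval, ?_, by simp⟩
    cases a
    · exact u_mem_cone
    · exact mul_mem u_mem_cone u_mem_cone
    · exact Δ_mem_cone
  | cons_cons a b r ihr ih =>
    have hab := h.isD_ne
    cases a <;> cases b <;> simp only [isD, ne_eq, not_true_eq_false] at hab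
    · obtain ⟨s, hs, hr⟩ := ihr h.tail.tail
      refine ⟨σ₂⁻¹ * s, mul_mem σ₂_inv_mem_cone hs, ?_⟩
      rw [Alternating.count_tail_eq_count h.tail] at hr
      simp only [List.map_cons, List.prod_cons, List.tail_cons, List.count_cons_self, hr,
        Syllable.eval, ← ((commute_z _).pow_left _).left_comm, pow_succ, mul_assoc]
      rw [← mul_assoc u, u_mul_Δ, mul_assoc]
    · obtain ⟨s, hs, hr⟩ := ihr h.tail.tail
      refine ⟨u * (σ₂⁻¹ * s), mul_mem u_mem_cone (mul_mem σ₂_inv_mem_cone hs), ?_⟩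
      rw [Alternating.count_tail_eq_count h.tail] at hr
      simp only [List.map_cons, List.prod_cons, List.tail_cons, List.count_cons_self, hr,
        Syllable.eval, ← ((commute_z _).pow_left _).left_comm, pow_succ, mul_assoc]
      rw [← mul_assoc u Δ, u_mul_Δ, mul_assoc, (commute_z u).left_comm]
    all_goals
      obtain ⟨s, hs, hr⟩ := ih _ h.tail
      refine ⟨Δ * s, mul_mem Δ_mem_cone hs, ?_⟩
      rw [List.map_cons, List.prod_cons, hr, ← ((commute_z _).pow_left _).left_comm]
      simp [Syllable.eval]

theorem eval_mem_cone {x : NF} (hx : 0 ≤ x.index) : eval x ∈ cone := by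
  obtain ⟨s, hs, hw⟩ := exists_prod_eval_eq_z_pow_mul x.alternating
  have : x.index = (x.index.toNat : ℤ) := (Int.toNat_of_nonneg hx).symm
  rw [eval, hw, ← mul_assoc, ← zpow_natCast, ← zpow_add, ← index, this, zpow_natCast]
  exact mul_mem (pow_mem z_mem_cone _) hs

theorem mem_cone_iff (g : B₃) : g ∈ cone ↔ 0 ≤ (nf g).index :=
  ⟨fun hg => index_le_index_act_of_mem_cone hg NF.one, fun h => eval_nf g ▸ eval_mem_cone h⟩

theorem mem_cone_or_inv_mem_cone (g : B₃) : g ∈ cone ∨ g⁻¹ ∈ cone := by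
  simpa only [mem_cone_iff, nf_inv] using (nf g).index_nonneg_or_index_inv_nonneg

theorem eq_one_of_mem_cone_of_inv_mem_cone {g : B₃} (h : g ∈ cone) (hinv : g⁻¹ ∈ cone) :
    g = 1 := by
  rw [mem_cone_iff] at h
  rw [mem_cone_iff, nf_inv] at hinv
  rw [← eval_nf g, NF.eq_one_of_index_nonneg_of_index_inv_nonneg h hinv]
  simp [eval, NF.one]

theorem u_ne_one : u ≠ 1 := fun h => by
  have := congrArg (fun g => (nf g).word) h
  simp [nf, act_u, permU, mulU, NF.one] at this

theorem σ₂_inv_ne_one : σ₂⁻¹ ≠ 1 := fun h => by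
  have := congrArg (fun g => (nf g).word) h
  simp only [nf, act_σ₂_inv_apply] at this
  simp [mulU, mulΔ, shift, NF.one] at this

end B₃

/-- (Dubrovina–Dubrovin) There is exactly one left order on `B₃` making both
`σ₁σ₂` and `σ₂⁻¹` positive. -/
theorem stmt_16 : ∃! r : B₃ → B₃ → Prop,
    IsLeftOrder r ∧ r 1 (σ₁ * σ₂) ∧ r 1 σ₂⁻¹ := by
  have h1 : (1 : B₃) ∉ ({B₃.u, σ₂⁻¹} : Set B₃) := by
    rintro (h | h)
    exacts [B₃.u_ne_one h.symm, B₃.σ₂_inv_ne_one h.symm]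
  simpa [B₃.u] using existsUnique_isLeftOrder_of_closure h1 B₃.mem_cone_or_inv_mem_cone
    fun _ => B₃.eq_one_of_mem_cone_of_inv_mem_cone
end
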